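/- arXiv:2401.15629 — 10 statements merged into one kernel-verified Lean document; each statement's English description precedes it below -/
import Mathlib

section
/- Let X be an AM-space, i.e., a Banach lattice whose norm satisfies ‖x ∨ y‖ = max(‖x‖, ‖y‖) for all x, y ∈ X₊. Then X has the strong Nakano property if and only if X has a strong unit, i.e., an element e ∈ X₊ such that for every x ∈ X one has ‖x‖ ≤ 1 if and only if |x| ≤ e. -/
section Aux

variable {X : Type*} [NormedAddCommGroup X] [Lattice X] [HasSolidNorm X]
    [IsOrderedAddMonoid X] [NormedSpace ℝ X]

lemma aux_pow2_smul_nonneg {x : X} : ∀ k : ℕ, 0 ≤ (2 ^ k) • x → 0 ≤ x := by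
  intro k
  induction k with
  | zero => simpa using fun h => h
  | succ n ih =>
    intro h
    rw [pow_succ, mul_comm, mul_smul] at h
    exact ih (nsmul_two_semiclosed h)

lemma aux_dyadic_smul_nonneg {x : X} (hx : 0 ≤ x) (m k : ℕ) :
    0 ≤ ((m : ℝ) / 2 ^ k) • x := by
  apply aux_pow2_smul_nonneg k
  have : (2 ^ k) • (((m : ℝ) / 2 ^ k) • x) = ((m : ℝ)) • x := by
    rw [← Nat.cast_smul_eq_nsmul ℝ, smul_smul]
    congr 1
    push_cast
    field_simp
  rw [this, Nat.cast_smul_eq_nsmul]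
  exact nsmul_nonneg hx m

lemma aux_smul_nonneg {c : ℝ} (hc : 0 ≤ c) {x : X} (hx : 0 ≤ x) : 0 ≤ c • x := by
  set a : ℕ → ℝ := fun n => (⌊c * 2 ^ n⌋₊ : ℝ) / 2 ^ n with ha
  have hposn : ∀ n, (0:ℝ) < 2 ^ n := fun n => by positivity
  have hupper : ∀ n, a n ≤ c := by
    intro n
    rw [ha, div_le_iff₀ (hposn n)]
    exact Nat.floor_le (by positivity)
  have hlower : ∀ n, c - (1/2 : ℝ) ^ n ≤ a n := by
    intro n
    rw [ha, le_div_iff₀ (hposn n), sub_mul, one_div, inv_pow, inv_mul_cancel₀ (hposn n).ne']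
    exact (Nat.sub_one_lt_floor (c * 2 ^ n)).le
  have htendc : Filter.Tendsto a Filter.atTop (nhds c) := by
    have h0 : Filter.Tendsto (fun n : ℕ => (1/2 : ℝ) ^ n) Filter.atTop (nhds 0) :=
      tendsto_pow_atTop_nhds_zero_of_lt_one (by norm_num) (by norm_num)
    have hg : Filter.Tendsto (fun n : ℕ => c - (1/2 : ℝ) ^ n) Filter.atTop (nhds c) := by
      simpa using tendsto_const_nhds.sub h0
    exact tendsto_of_tendsto_of_tendsto_of_le_of_le hg tendsto_const_nhds hlower hupper
  have htend : Filter.Tendsto (fun n => a n • x) Filter.atTop (nhds (c • x)) :=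
    htendc.smul_const x
  have hmem : ∀ n, a n • x ∈ {y : X | 0 ≤ y} := fun n => aux_dyadic_smul_nonneg hx _ n
  exact isClosed_nonneg.mem_of_tendsto htend (Filter.Eventually.of_forall hmem)

end Aux

/-- A Banach lattice `X` has the **strong Nakano property** if every nonempty norm-bounded
upwards directed set `A ⊆ X₊` has an upper bound `b ∈ X₊` with `‖b‖ = sup {‖a‖ : a ∈ A}`. -/
def StrongNakano (X : Type*) [NormedAddCommGroup X] [Lattice X] [HasSolidNorm X]
    [IsOrderedAddMonoid X] : Prop :=
  ∀ A : Set X, A.Nonempty → (∀ a ∈ A, 0 ≤ a) → DirectedOn (· ≤ ·) A →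
    BddAbove (norm '' A) →
    ∃ b : X, 0 ≤ b ∧ b ∈ upperBounds A ∧ ‖b‖ = sSup (norm '' A)

/-- **Proposition.** An AM-space has the strong Nakano property iff it has a strong unit. -/
theorem amSpace_strongNakano_iff_strongUnit
    (X : Type*) [NormedAddCommGroup X] [Lattice X] [HasSolidNorm X]
    [IsOrderedAddMonoid X] [NormedSpace ℝ X] [CompleteSpace X]
    (hAM : ∀ x y : X, 0 ≤ x → 0 ≤ y → ‖x ⊔ y‖ = max ‖x‖ ‖y‖) :
    StrongNakano X ↔ ∃ e : X, 0 ≤ e ∧ ∀ x : X, ‖x‖ ≤ 1 ↔ |x| ≤ e := by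
  constructor
  · intro hSN
    obtain ⟨b, hb0, hub, hnorm⟩ := hSN {x : X | 0 ≤ x ∧ ‖x‖ ≤ 1}
      ⟨0, by simp⟩ (fun a ha => ha.1)
      (fun x hx y hy => ⟨x ⊔ y,
        ⟨le_trans hx.1 le_sup_left, by
          rw [hAM x y hx.1 hy.1]; exact max_le hx.2 hy.2⟩, le_sup_left, le_sup_right⟩)
      ⟨1, by rintro m ⟨a, ha, rfl⟩; exact ha.2⟩
    have hbn : ‖b‖ ≤ 1 := by
      rw [hnorm]
      have hne : (norm '' {x : X | 0 ≤ x ∧ ‖x‖ ≤ 1}).Nonempty := ⟨‖(0:X)‖, ⟨0, by simp, rfl⟩⟩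
      apply csSup_le hne
      rintro m ⟨a, ha, rfl⟩
      exact ha.2
    refine ⟨b, hb0, fun x => ⟨fun hx => ?_, fun hx => ?_⟩⟩
    · exact hub ⟨abs_nonneg x, by rwa [norm_abs_eq_norm]⟩
    · calc ‖x‖ = ‖|x|‖ := (norm_abs_eq_norm x).symm
        _ ≤ ‖b‖ := HasSolidNorm.solid (by rwa [abs_abs, abs_of_nonneg hb0])
        _ ≤ 1 := hbn
  · rintro ⟨e, he, hunit⟩
    intro A hA hApos hdir hbdd
    obtain ⟨a₀, ha₀⟩ := hA
    set M := sSup (norm '' A) with hMdef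
    have hle : ∀ a ∈ A, ‖a‖ ≤ M := fun a ha => le_csSup hbdd ⟨a, ha, rfl⟩
    have hM0 : 0 ≤ M := (norm_nonneg a₀).trans (hle a₀ ha₀)
    rcases eq_or_lt_of_le hM0 with h0 | hMpos
    · refine ⟨0, le_refl 0, ?_, by simp [← h0]⟩
      intro a ha
      have h1 : ‖a‖ ≤ 0 := h0 ▸ hle a ha
      have : a = 0 := norm_eq_zero.mp (le_antisymm h1 (norm_nonneg a))
      simp [this]
    · have he1 : ‖e‖ ≤ 1 := (hunit e).mpr (le_of_eq (abs_of_nonneg he))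
      have hub : ∀ a ∈ A, a ≤ M • e := by
        intro a ha
        have hax : ‖M⁻¹ • a‖ ≤ 1 := by
          rw [norm_smul, Real.norm_eq_abs, abs_of_nonneg (inv_nonneg.mpr hM0),
            inv_mul_le_one₀ hMpos]
          exact hle a ha
        have h2 : M⁻¹ • a ≤ e := by
          have := (hunit _).mp hax
          rwa [abs_of_nonneg (aux_smul_nonneg (inv_nonneg.mpr hM0) (hApos a ha))] at this
        have h3 : 0 ≤ M • (e - M⁻¹ • a) := aux_smul_nonneg hM0 (sub_nonneg.mpr h2)
        rw [smul_sub, smul_smul, mul_inv_cancel₀ hMpos.ne', one_smul, sub_nonneg] at h3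
        exact h3
      refine ⟨M • e, aux_smul_nonneg hM0 he, hub, le_antisymm ?_ ?_⟩
      · calc ‖M • e‖ = |M| * ‖e‖ := by rw [norm_smul, Real.norm_eq_abs]
          _ ≤ M * 1 := by rw [abs_of_nonneg hM0]; exact mul_le_mul_of_nonneg_left he1 hM0
          _ = M := mul_one M
      · have hne : (norm '' A).Nonempty := ⟨‖a₀‖, ⟨a₀, ha₀, rfl⟩⟩
        apply csSup_le hne
        rintro m ⟨a, ha, rfl⟩
        exact HasSolidNorm.solid (by
          rw [abs_of_nonneg (hApos a ha), abs_of_nonneg (aux_smul_nonneg hM0 he)]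
          exact hub a ha)
end

section
/- Let X be a separable Banach lattice and λ ≥ 1. Then X has the λ-strong Nakano property if and only if X has the λ-strong σ-Nakano property, i.e., every increasing norm-bounded sequence (x_n) in X₊ has an upper bound b ∈ X₊ with ‖b‖ ≤ λ·sup_n ‖x_n‖. -/
/-- For `λ ≥ 1`, a Banach lattice has the **λ-strong Nakano property** if every nonempty
norm-bounded upwards directed set `A ⊆ X₊` has an upper bound `b ∈ X₊` with
`‖b‖ ≤ λ · sup {‖a‖ : a ∈ A}`. -/
def LamStrongNakano (X : Type*) [NormedAddCommGroup X] [Lattice X] [IsOrderedAddMonoid X] [HasSolidNorm X] (lam : ℝ) : Prop :=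
  ∀ A : Set X, A.Nonempty → (∀ a ∈ A, 0 ≤ a) → DirectedOn (· ≤ ·) A →
    BddAbove (norm '' A) →
    ∃ b : X, 0 ≤ b ∧ b ∈ upperBounds A ∧ ‖b‖ ≤ lam * sSup (norm '' A)

/-- For `λ ≥ 1`, a Banach lattice has the **λ-strong σ-Nakano property** if every increasing
norm-bounded sequence `(x_n) ⊆ X₊` has an upper bound `b ∈ X₊` with `‖b‖ ≤ λ · sup_n ‖x_n‖`. -/
def LamStrongSigmaNakano (X : Type*) [NormedAddCommGroup X] [Lattice X] [IsOrderedAddMonoid X] [HasSolidNorm X] (lam : ℝ) : Prop :=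
  ∀ x : ℕ → X, Monotone x → (∀ n, 0 ≤ x n) → (∃ M : ℝ, ∀ n, ‖x n‖ ≤ M) →
    ∃ b : X, 0 ≤ b ∧ (∀ n, x n ≤ b) ∧ ‖b‖ ≤ lam * ⨆ n, ‖x n‖

/-- **Lemma.** A separable Banach lattice has the λ-strong Nakano property iff it has the
λ-strong σ-Nakano property. -/
theorem separable_lamStrongNakano_iff_sigma
    (X : Type*) [NormedAddCommGroup X] [Lattice X] [IsOrderedAddMonoid X] [HasSolidNorm X] [NormedSpace ℝ X] [CompleteSpace X]
    [TopologicalSpace.SeparableSpace X]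
    (lam : ℝ) (hlam : 1 ≤ lam) :
    LamStrongNakano X lam ↔ LamStrongSigmaNakano X lam := by
  constructor
  · -- Nakano ⟹ σ-Nakano : apply to the range of the sequence
    intro h x hmono hpos ⟨M, hM⟩
    have hA : DirectedOn (· ≤ ·) (Set.range x) := by
      rintro _ ⟨m, rfl⟩ _ ⟨n, rfl⟩
      exact ⟨x (max m n), ⟨max m n, rfl⟩, hmono (le_max_left m n),
        hmono (le_max_right m n)⟩
    have hbdd : BddAbove (norm '' Set.range x) := by
      refine ⟨M, ?_⟩
      rintro _ ⟨_, ⟨n, rfl⟩, rfl⟩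
      exact hM n
    obtain ⟨b, hb0, hub, hbn⟩ := h (Set.range x) ⟨x 0, 0, rfl⟩
      (by rintro _ ⟨n, rfl⟩; exact hpos n) hA hbdd
    refine ⟨b, hb0, fun n => hub ⟨n, rfl⟩, ?_⟩
    have : norm '' Set.range x = Set.range fun n => ‖x n‖ := by
      rw [← Set.range_comp]; rfl
    rw [this] at hbn
    exact hbn
  · -- σ-Nakano ⟹ Nakano, using separability
    intro h A hne hpos hdir hbdd
    -- countable dense subset of A inside A
    have hsep : TopologicalSpace.IsSeparable A :=
      (TopologicalSpace.isSeparable_univ_iff.2 ‹_›).mono (Set.subset_univ A)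
    obtain ⟨D, hDA, hDc, hAD⟩ := hsep.exists_countable_dense_subset
    have hDne : D.Nonempty := by
      rcases hne with ⟨a, ha⟩
      by_contra hD
      rw [Set.not_nonempty_iff_eq_empty] at hD
      simp [hD] at hAD
      exact Set.notMem_empty a (hAD ▸ ha)
    obtain ⟨d, rfl⟩ := Set.Countable.exists_eq_range hDc hDne
    have hdA : ∀ n, d n ∈ A := fun n => hDA ⟨n, rfl⟩
    -- build an increasing sequence in A dominating each d n
    choose! f hfA hf1 hf2 using fun (a : X) (ha : a ∈ A) (n : ℕ) =>
      hdir a ha (d n) (hdA n)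
    let x : ℕ → X := fun n => Nat.rec (d 0) (fun k xk => f xk (k + 1)) n
    have hxA : ∀ n, x n ∈ A := by
      intro n
      induction n with
      | zero => exact hdA 0
      | succ k ih => exact hfA _ ih (k + 1)
    have hxd : ∀ n, d n ≤ x n := by
      intro n
      cases n with
      | zero => exact le_rfl
      | succ k => exact hf2 _ (hxA k) (k + 1)
    have hmono : Monotone x :=
      monotone_nat_of_le_succ fun n => hf1 _ (hxA n) (n + 1)
    have hxnorm : ∀ n, ‖x n‖ ≤ sSup (norm '' A) := fun n =>
      le_csSup hbdd ⟨x n, hxA n, rfl⟩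
    obtain ⟨b, hb0, hub, hbn⟩ := h x hmono (fun n => hpos _ (hxA n))
      ⟨sSup (norm '' A), hxnorm⟩
    refine ⟨b, hb0, ?_, ?_⟩
    · -- b bounds each d n, hence the closure of their range, hence A
      intro a ha
      have hcl : closure (Set.range d) ⊆ {y : X | y ≤ b} := by
        apply closure_minimal
        · rintro _ ⟨n, rfl⟩
          exact (hxd n).trans (hub n)
        · exact isClosed_le continuous_id continuous_const
      exact hcl (hAD ha)
    · refine hbn.trans ?_
      apply mul_le_mul_of_nonneg_left _ (le_trans zero_le_one hlam)
      exact ciSup_le hxnorm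
end

section
/- Let ℓ∞(ℝ) denote the space of bounded functions ℝ → ℝ with the supremum norm and pointwise order, and let X = {x ∈ ℓ∞(ℝ) : the support {t : x(t) ≠ 0} is countable}. Then X has the strong σ-Nakano property: every increasing norm-bounded sequence (x_n) in X₊ has an upper bound b ∈ X₊ with ‖b‖ = sup_n ‖x_n‖. -/
/-- **Example (positive part).** The sublattice `X = {x ∈ ℓ∞(ℝ) : supp(x) countable}` of the
bounded functions `ℝ → ℝ` (sup norm, pointwise order) has the strong σ-Nakano property:
every increasing norm-bounded sequence in `X₊` has an upper bound `b ∈ X₊` whose sup norm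
equals the supremum of the sup norms of the terms. -/
theorem countableSupport_boundedFunctions_strong_sigma_nakano
    (x : ℕ → ℝ → ℝ)
    (hbdd : ∀ n, ∃ M : ℝ, ∀ t, |x n t| ≤ M)
    (hsupp : ∀ n, Set.Countable {t : ℝ | x n t ≠ 0})
    (hmono : Monotone x)
    (hpos : ∀ n, ∀ t, 0 ≤ x n t)
    (hnormbdd : ∃ M : ℝ, ∀ n, ∀ t, |x n t| ≤ M) :
    ∃ b : ℝ → ℝ, (∃ M : ℝ, ∀ t, |b t| ≤ M) ∧ Set.Countable {t : ℝ | b t ≠ 0} ∧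
      (∀ t, 0 ≤ b t) ∧ (∀ n, x n ≤ b) ∧
      (⨆ t : ℝ, |b t|) = ⨆ n : ℕ, ⨆ t : ℝ, |x n t| := by
  obtain ⟨M, hM⟩ := hnormbdd
  set b : ℝ → ℝ := fun t => ⨆ n, x n t with hb
  have hbdd' : ∀ t, BddAbove (Set.range fun n => x n t) :=
    fun t => ⟨M, by rintro _ ⟨n, rfl⟩; exact (abs_le.mp (hM n t)).2⟩
  have hxb : ∀ n t, x n t ≤ b t := fun n t => le_ciSup (hbdd' t) n
  have hb0 : ∀ t, 0 ≤ b t := fun t => le_trans (hpos 0 t) (hxb 0 t)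
  have hbM : ∀ t, b t ≤ M := fun t => ciSup_le fun n => (abs_le.mp (hM n t)).2
  have habs : ∀ t, |b t| = b t := fun t => abs_of_nonneg (hb0 t)
  refine ⟨b, ⟨M, fun t => by rw [habs t]; exact hbM t⟩, ?_, hb0, fun n t => hxb n t, ?_⟩
  · refine Set.Countable.mono ?_ (Set.countable_iUnion hsupp)
    intro t ht
    by_contra h
    simp only [Set.mem_iUnion, Set.mem_setOf_eq, not_exists, not_not] at h
    apply ht
    simp only [hb]
    rw [show (fun n => x n t) = fun _ : ℕ => (0 : ℝ) from funext h, ciSup_const]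
  · have hxabs : ∀ n t, |x n t| = x n t := fun n t => abs_of_nonneg (hpos n t)
    have hbddT : ∀ n, BddAbove (Set.range fun t => |x n t|) :=
      fun n => ⟨M, by rintro _ ⟨t, rfl⟩; exact hM n t⟩
    have hbddN : BddAbove (Set.range fun n => ⨆ t, |x n t|) :=
      ⟨M, by rintro _ ⟨n, rfl⟩; exact ciSup_le fun t => hM n t⟩
    have hbddB : BddAbove (Set.range fun t => |b t|) :=
      ⟨M, by rintro _ ⟨t, rfl⟩; show |b t| ≤ M; rw [habs t]; exact hbM t⟩
    apply le_antisymm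
    · refine ciSup_le fun t => ?_
      rw [habs t]
      refine ciSup_le fun n => ?_
      calc x n t = |x n t| := (hxabs n t).symm
        _ ≤ ⨆ t, |x n t| := le_ciSup (hbddT n) t
        _ ≤ ⨆ n, ⨆ t, |x n t| := le_ciSup hbddN n
    · refine ciSup_le fun n => ciSup_le fun t => ?_
      calc |x n t| = x n t := hxabs n t
        _ ≤ b t := hxb n t
        _ = |b t| := (habs t).symm
        _ ≤ ⨆ t, |b t| := le_ciSup hbddB t
end

section
/- Let ℓ∞(ℝ) denote the space of bounded functions ℝ → ℝ with the supremum norm and pointwise order, and let X = {x ∈ ℓ∞(ℝ) : the support {t : x(t) ≠ 0} is countable}. Then X fails the strong Nakano property: the family {χ_A : A ⊆ ℝ countable} of indicator functions of countable subsets of ℝ is an upwards directed, norm-bounded subset of X₊ which has no upper bound in X. -/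
/-- The family of indicator functions of countable subsets of `ℝ`. -/
def indicatorFamily : Set (ℝ → ℝ) :=
  {x | ∃ A : Set ℝ, A.Countable ∧ x = A.indicator (fun _ => (1 : ℝ))}

lemma indicator_abs_le (A : Set ℝ) (t : ℝ) :
    |A.indicator (fun _ => (1 : ℝ)) t| ≤ 1 := by
  by_cases h : t ∈ A <;> simp [Set.indicator, h]

lemma indicator_le_indicator_of_subset {A B : Set ℝ} (h : A ⊆ B) :
    A.indicator (fun _ => (1 : ℝ)) ≤ B.indicator (fun _ => (1 : ℝ)) := by
  intro t
  by_cases ht : t ∈ A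
  · simp [Set.indicator, ht, h ht]
  · by_cases ht' : t ∈ B <;> simp [Set.indicator, ht, ht']

/-- **Example (negative part).** In the sublattice `X = {x ∈ ℓ∞(ℝ) : supp(x) countable}` of the
bounded functions `ℝ → ℝ`, the family `{χ_A : A ⊆ ℝ countable}` is upwards directed,
norm bounded, consists of positive elements of `X`, but has no upper bound in `X`;
hence `X` fails the strong Nakano property. -/
theorem countableSupport_boundedFunctions_fails_strongNakano :
    DirectedOn (· ≤ ·) indicatorFamily ∧
    (∀ x ∈ indicatorFamily,
      (∃ M : ℝ, ∀ t, |x t| ≤ M) ∧ Set.Countable {t : ℝ | x t ≠ 0} ∧ ∀ t, 0 ≤ x t) ∧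
    (∃ M : ℝ, ∀ x ∈ indicatorFamily, ∀ t, |x t| ≤ M) ∧
    ¬ ∃ b : ℝ → ℝ, (∃ M : ℝ, ∀ t, |b t| ≤ M) ∧ Set.Countable {t : ℝ | b t ≠ 0} ∧
        ∀ x ∈ indicatorFamily, x ≤ b := by
  refine ⟨?_, ?_, ?_, ?_⟩
  · rintro x ⟨A, hA, rfl⟩ y ⟨B, hB, rfl⟩
    exact ⟨(A ∪ B).indicator (fun _ => 1), ⟨A ∪ B, hA.union hB, rfl⟩,
      indicator_le_indicator_of_subset Set.subset_union_left,
      indicator_le_indicator_of_subset Set.subset_union_right⟩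
  · rintro x ⟨A, hA, rfl⟩
    refine ⟨⟨1, indicator_abs_le A⟩, hA.mono ?_, ?_⟩
    · intro t ht
      by_contra h
      exact ht (by simp [Set.indicator, h])
    · intro t
      by_cases h : t ∈ A <;> simp [Set.indicator, h]
  · exact ⟨1, by rintro x ⟨A, hA, rfl⟩; exact indicator_abs_le A⟩
  · rintro ⟨b, _, hcount, hub⟩
    have : ({t : ℝ | b t ≠ 0} : Set ℝ) ≠ Set.univ := by
      intro h
      exact (Set.not_countable_univ (α := ℝ)) (h ▸ hcount)
    obtain ⟨t, ht⟩ : ∃ t : ℝ, b t = 0 := by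
      by_contra h
      push_neg at h
      exact this (Set.eq_univ_of_forall h)
    have := hub (({t} : Set ℝ).indicator (fun _ => (1:ℝ))) ⟨{t}, Set.countable_singleton t, rfl⟩ t
    simp [Set.indicator, ht] at this
    linarith
end

section
/- Let X be a Banach lattice and let Y ⊆ X be a sublattice (a linear subspace closed under the lattice operations ∨ and ∧), equipped with the norm and order inherited from X, which is order dense in X: for every x ∈ X with x > 0 there exists y ∈ Y with 0 < y ≤ x. If Y has the strong Nakano property, then X has the strong Nakano property. -/
/-- **Lemma.** If `Y` is an order dense sublattice of a Banach lattice `X` and `Y` (with the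
inherited norm and order) has the strong Nakano property, then `X` has the strong Nakano
property. -/
theorem strongNakano_of_orderDense_sublattice
    (X : Type*) [NormedAddCommGroup X] [Lattice X] [HasSolidNorm X] [IsOrderedAddMonoid X] [NormedSpace ℝ X] [CompleteSpace X]
    (Y : Submodule ℝ X)
    (hsup : ∀ x ∈ Y, ∀ y ∈ Y, x ⊔ y ∈ Y)
    (hinf : ∀ x ∈ Y, ∀ y ∈ Y, x ⊓ y ∈ Y)
    -- `Y` is order dense in `X`
    (hdense : ∀ x : X, 0 < x → ∃ y ∈ Y, 0 < y ∧ y ≤ x)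
    -- `Y` has the strong Nakano property
    (hY : ∀ A : Set X, A ⊆ (Y : Set X) → A.Nonempty → (∀ a ∈ A, 0 ≤ a) →
      DirectedOn (· ≤ ·) A → BddAbove (norm '' A) →
      ∃ b ∈ Y, 0 ≤ b ∧ b ∈ upperBounds A ∧ ‖b‖ = sSup (norm '' A)) :
    -- then `X` has the strong Nakano property
    ∀ A : Set X, A.Nonempty → (∀ a ∈ A, 0 ≤ a) → DirectedOn (· ≤ ·) A →
      BddAbove (norm '' A) →
      ∃ b : X, 0 ≤ b ∧ b ∈ upperBounds A ∧ ‖b‖ = sSup (norm '' A) := by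
  intro A hA hApos hAdir hAbdd
  obtain ⟨a₀, ha₀⟩ := hA
  obtain ⟨M, hM⟩ := hAbdd
  have key : ∀ (y x : X), 0 ≤ y → y ≤ x → ‖y‖ ≤ ‖x‖ := by
    intro y x h0 hle
    exact norm_le_norm_of_abs_le_abs
      (by rwa [abs_of_nonneg h0, abs_of_nonneg (h0.trans hle)])
  set B : Set X := {y | y ∈ Y ∧ 0 ≤ y ∧ ∃ a ∈ A, y ≤ a} with hBdef
  have hBY : B ⊆ (Y : Set X) := fun y hy => hy.1
  have hBne : B.Nonempty := ⟨0, Y.zero_mem, le_refl 0, a₀, ha₀, hApos a₀ ha₀⟩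
  have hBpos : ∀ y ∈ B, (0 : X) ≤ y := fun y hy => hy.2.1
  have hBdir : DirectedOn (· ≤ ·) B := by
    rintro y₁ ⟨hy₁Y, hy₁0, a₁, ha₁, hy₁a⟩ y₂ ⟨hy₂Y, hy₂0, a₂, ha₂, hy₂a⟩
    obtain ⟨a₃, ha₃, h13, h23⟩ := hAdir a₁ ha₁ a₂ ha₂
    exact ⟨y₁ ⊔ y₂, ⟨hsup _ hy₁Y _ hy₂Y, hy₁0.trans le_sup_left,
      a₃, ha₃, sup_le (hy₁a.trans h13) (hy₂a.trans h23)⟩, le_sup_left, le_sup_right⟩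
  have hBbdd : BddAbove (norm '' B) := by
    refine ⟨M, ?_⟩
    rintro r ⟨y, ⟨hyY, hy0, a, ha, hya⟩, rfl⟩
    exact (key y a hy0 hya).trans (hM ⟨a, ha, rfl⟩)
  obtain ⟨b, hbY, hb0, hbub, hbnorm⟩ := hY B hBY hBne hBpos hBdir hBbdd
  -- b is an upper bound of A
  have hbubA : b ∈ upperBounds A := by
    intro a ha
    by_contra hab
    have hapos := hApos a ha
    have hinfle : a ⊓ b ≤ a := inf_le_left
    have hpos : 0 < a - a ⊓ b := by
      rw [sub_pos]
      exact lt_of_le_of_ne hinfle (fun h => hab (inf_eq_left.mp h))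
    obtain ⟨y, hyY, hy0, hyle⟩ := hdense _ hpos
    -- by induction, (n+1) • y ≤ a for all n
    have hind : ∀ n : ℕ, (n + 1) • y ≤ a := by
      intro n
      induction n with
      | zero =>
        simpa using hyle.trans (sub_le_self a (le_inf hapos hb0))
      | succ n ih =>
        have hcB : (n + 1) • y ∈ B :=
          ⟨nsmul_mem hyY _, nsmul_nonneg hy0.le _, a, ha, ih⟩
        have hcb : (n + 1) • y ≤ b := hbub hcB
        calc (n + 1 + 1) • y = (n + 1) • y + y := succ_nsmul y (n + 1)
          _ ≤ a ⊓ b + (a - a ⊓ b) := add_le_add (le_inf ih hcb) hyle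
          _ = a := by abel
    -- Archimedean contradiction via norms
    have hnorm : ∀ n : ℕ, ((n : ℝ) + 1) * ‖y‖ ≤ ‖a‖ := by
      intro n
      have h1 := key _ _ (nsmul_nonneg hy0.le (n + 1)) (hind n)
      have h2 : ((n + 1 : ℕ) : ℝ) • y = (n + 1) • y := by
        rw [Nat.cast_smul_eq_nsmul]
      rw [← h2, norm_smul] at h1
      simpa [abs_of_nonneg (by positivity : (0:ℝ) ≤ (n : ℝ) + 1)] using h1
    have hy0' : 0 < ‖y‖ := norm_pos_iff.mpr (ne_of_gt hy0)
    obtain ⟨n, hn⟩ := exists_nat_gt (‖a‖ / ‖y‖)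
    have hd : ((n : ℝ) + 1) ≤ ‖a‖ / ‖y‖ := (le_div_iff₀ hy0').mpr (hnorm n)
    exact absurd hd (hn.trans (lt_add_one _)).not_ge
  refine ⟨b, hb0, hbubA, ?_⟩
  rw [hbnorm]
  apply le_antisymm
  · apply csSup_le (hBne.image _)
    rintro r ⟨y, ⟨hyY, hy0, a, ha, hya⟩, rfl⟩
    exact (key y a hy0 hya).trans (le_csSup ⟨M, hM⟩ ⟨a, ha, rfl⟩)
  · apply csSup_le (Set.Nonempty.image norm ⟨a₀, ha₀⟩)
    rintro r ⟨a, ha, rfl⟩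
    exact (key a b (hApos a ha) (hbubA ha)).trans hbnorm.le
end

section
/- Let X be a Banach lattice with the strong Nakano property, let Y ⊆ X be a closed sublattice, let P : X → X be a bounded linear projection with range Y (so P∘P = P and P(X) = Y), and let S : X → X be a bounded positive linear operator (x ≥ 0 implies Sx ≥ 0) with S(X) ⊆ Y and Px ≤ Sx for every x ∈ X₊. Then Y, with the inherited norm and order, has the ‖S‖-strong Nakano property. -/
/-- **Proposition.** If `X` is a Banach lattice with the strong Nakano property, `Y ⊆ X` is a
closed sublattice complemented by a bounded projection `P` whose range is `Y`, and `S` is a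
bounded positive operator with range inside `Y` dominating `P` on the positive cone (playing
the role of a modulus `|P|` witnessing regularity of `P`), then `Y` (with the inherited norm
and order) has the `‖S‖`-strong Nakano property. -/
theorem complemented_sublattice_lamStrongNakano
    (X : Type*) [NormedAddCommGroup X] [Lattice X] [HasSolidNorm X] [IsOrderedAddMonoid X] [NormedSpace ℝ X] [CompleteSpace X]
    -- `X` has the strong Nakano property
    (hSN : ∀ A : Set X, A.Nonempty → (∀ a ∈ A, 0 ≤ a) → DirectedOn (· ≤ ·) A →
      BddAbove (norm '' A) →
      ∃ b : X, 0 ≤ b ∧ b ∈ upperBounds A ∧ ‖b‖ = sSup (norm '' A))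
    (Y : Submodule ℝ X) (hclosed : IsClosed (Y : Set X))
    (hsup : ∀ x ∈ Y, ∀ y ∈ Y, x ⊔ y ∈ Y)
    (hinf : ∀ x ∈ Y, ∀ y ∈ Y, x ⊓ y ∈ Y)
    (P S : X →L[ℝ] X)
    (hproj : ∀ x : X, P (P x) = P x)
    (hrange : Set.range P = (Y : Set X))
    (hSpos : ∀ x : X, 0 ≤ x → 0 ≤ S x)
    (hSrange : ∀ x : X, S x ∈ Y)
    (hPS : ∀ x : X, 0 ≤ x → P x ≤ S x) :
    -- then `Y` has the `‖S‖`-strong Nakano property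
    ∀ A : Set X, A ⊆ (Y : Set X) → A.Nonempty → (∀ a ∈ A, 0 ≤ a) → DirectedOn (· ≤ ·) A →
      BddAbove (norm '' A) →
      ∃ b ∈ Y, 0 ≤ b ∧ b ∈ upperBounds A ∧ ‖b‖ ≤ ‖S‖ * sSup (norm '' A) := by
  intro A hAY hne hApos hdir hbdd
  obtain ⟨b, hb0, hub, hbnorm⟩ := hSN A hne hApos hdir hbdd
  refine ⟨S b, hSrange b, hSpos b hb0, ?_, ?_⟩
  · intro a ha
    have haY : a ∈ (Y : Set X) := hAY ha
    have haR : a ∈ Set.range P := by rw [hrange]; exact haY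
    obtain ⟨x, hx⟩ := haR
    have hPa : P a = a := by rw [← hx, hproj]
    have h1 : a ≤ S a := by
      calc a = P a := hPa.symm
      _ ≤ S a := hPS a (hApos a ha)
    have h2 : S a ≤ S b := by
      have := hSpos (b - a) (sub_nonneg.mpr (hub ha))
      rw [map_sub] at this
      exact sub_nonneg.mp this
    exact h1.trans h2
  · calc ‖S b‖ ≤ ‖S‖ * ‖b‖ := S.le_opNorm b
    _ = ‖S‖ * sSup (norm '' A) := by rw [hbnorm]
end

section
/- There exist a constant C ≥ 1 and a function κ : ℕ → ℕ with the following property: for every finite-dimensional real Banach space E of dimension n and every positively homogeneous function f : E* → ℝ one has ‖f‖_{FBL[E]} ≤ C · ‖f‖_{FBL_{κ(n)}[E]}. -/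
open scoped ENNReal

/-- `‖f‖_{FBL_k[E]}`: the `k`-vector free Banach lattice norm of a positively homogeneous
function `f : E* → ℝ`, with values in `[0,∞]`. -/
noncomputable def fblNormK (E : Type*) [NormedAddCommGroup E] [NormedSpace ℝ E]
    (k : ℕ) (f : (E →L[ℝ] ℝ) → ℝ) : ℝ≥0∞ :=
  ⨆ (x : Fin k → (E →L[ℝ] ℝ)) (_ : ∀ v : E, ‖v‖ ≤ 1 → ∑ i, |x i v| ≤ 1),
    ENNReal.ofReal (∑ i, |f (x i)|)

/-- `‖f‖_{FBL[E]} = sup_k ‖f‖_{FBL_k[E]}`. -/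
noncomputable def fblNorm (E : Type*) [NormedAddCommGroup E] [NormedSpace ℝ E]
    (f : (E →L[ℝ] ℝ) → ℝ) : ℝ≥0∞ :=
  ⨆ k : ℕ, fblNormK E k f


/-!
Fix `e₁, …, eₙ` in the unit ball of `E` with `‖u‖ ≤ ∑ⱼ |u eⱼ|` for every functional `u`: a basis
of maximal determinant among families in the unit ball has all coordinate functionals of norm
`≤ 1` (Cramer's rule), so it is such a system. For an admissible family `(xᵢ)` the total mass
`∑ ‖xᵢ‖` is then at most `n`. Sort the normalized functionals `xᵢ / ‖xᵢ‖` into the cells of the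
grid of mesh `1 / (n² + 1)` in the coordinates `u ↦ (u eⱼ)ⱼ`; two functionals in one cell are
within `n / (n² + 1)` of each other. Replacing each cell by half of its mass times the member `r`
maximizing `|f r|` gives a family indexed by the `(2n² + 3)ⁿ` cells which is still admissible
(the error `n · n / (n² + 1) ≤ 1` is absorbed by the factor `1 / 2`) and which, by positive
homogeneity, retains at least half of `∑ᵢ |f xᵢ|`.
-/

open Module NormedSpace

theorem NormedSpace.norm_normalize_le_one {V : Type*} [NormedAddCommGroup V] [NormedSpace ℝ V]
    (x : V) : ‖normalize x‖ ≤ 1 := by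
  rcases eq_or_ne x 0 with rfl | hx
  · simp
  · exact (norm_normalize_eq_one_iff.mpr hx).le

section Auerbach

variable {E : Type*} [NormedAddCommGroup E] [NormedSpace ℝ E] {ι : Type*} [Fintype ι]

theorem Module.Basis.opNorm_le_sum_abs_apply (e : Basis ι ℝ E) (he : ∀ j x, |e.coord j x| ≤ ‖x‖)
    (u : E →L[ℝ] ℝ) : ‖u‖ ≤ ∑ j, |u (e j)| := by
  refine u.opNorm_le_bound (by positivity) fun x => ?_
  have hux : u x = ∑ j, e.coord j x * u (e j) := by
    conv_lhs => rw [← e.sum_repr x]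
    simp only [map_sum, map_smul, smul_eq_mul, Basis.coord_apply]
  calc ‖u x‖ = |∑ j, e.coord j x * u (e j)| := by rw [Real.norm_eq_abs, hux]
    _ ≤ ∑ j, |e.coord j x| * |u (e j)| :=
        (Finset.abs_sum_le_sum_abs _ _).trans_eq (by simp only [abs_mul])
    _ ≤ ∑ j, ‖x‖ * |u (e j)| := by gcongr with j; exact he j x
    _ = (∑ j, |u (e j)|) * ‖x‖ := by rw [← Finset.mul_sum, mul_comm]

variable [DecidableEq ι]

theorem Module.Basis.exists_basis_norm_le_one_forall_abs_det_le (b : Basis ι ℝ E) :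
    ∃ e : Basis ι ℝ E, (∀ i, ‖e i‖ ≤ 1) ∧
      ∀ v : ι → E, (∀ i, ‖v i‖ ≤ 1) → |b.det v| ≤ |b.det e| := by
  have := b.finiteDimensional_of_finite
  set K : Set (ι → E) := Set.univ.pi fun _ => Metric.closedBall 0 1
  have hK : IsCompact K := isCompact_univ_pi fun _ => isCompact_closedBall 0 1
  have hmemK : ∀ v : ι → E, v ∈ K ↔ ∀ i, ‖v i‖ ≤ 1 := by simp [K]
  have hdet : Continuous fun v : ι → E => b.det v := by
    simp_rw [b.det_apply]
    exact (continuous_matrix fun i j =>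
      ((b.coord i).continuous_of_finiteDimensional).comp (continuous_apply j)).matrix_det
  have hunit : ∀ i, IsUnit ‖b i‖⁻¹ := fun i => by simpa using b.ne_zero i
  have hb₀ : ⇑(b.isUnitSMul hunit) ∈ K := by
    refine (hmemK _).mpr fun i => ?_
    rw [Basis.isUnitSMul_apply]
    exact norm_normalize_le_one (b i)
  obtain ⟨e, heK, hmax⟩ := hK.exists_isMaxOn ⟨_, hb₀⟩ (continuous_abs.comp hdet).continuousOn
  have he : b.det e ≠ 0 := by
    have h₀ : b.det (b.isUnitSMul hunit) ≠ 0 := by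
      simp [Finset.prod_ne_zero_iff, b.ne_zero]
    exact abs_pos.mp ((abs_pos.mpr h₀).trans_le (hmax hb₀))
  obtain ⟨hli, hsp⟩ := b.is_basis_iff_det.mpr (isUnit_iff_ne_zero.mpr he)
  refine ⟨Basis.mk hli hsp.ge, ?_, fun v hv => ?_⟩
  · simpa [Basis.coe_mk, hmemK] using heK
  · simpa [Basis.coe_mk] using hmax ((hmemK v).mpr hv)

theorem Module.Basis.abs_coord_le_norm_of_forall_abs_det_le (b e : Basis ι ℝ E)
    (he : ∀ i, ‖e i‖ ≤ 1) (hmax : ∀ v : ι → E, (∀ i, ‖v i‖ ≤ 1) → |b.det v| ≤ |b.det e|)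
    (j : ι) (x : E) :
    |e.coord j x| ≤ ‖x‖ := by
  have hupdate : ∀ y : E, b.det (Function.update e j y) = b.det e * e.coord j y := by
    intro y
    have h := congr($(b.det_smul_mk_coord_eq_det_update e.linearIndependent e.span_eq.ge j) y)
    rwa [show Basis.mk e.linearIndependent e.span_eq.ge = e from
      Basis.eq_of_apply_eq fun _ => by rw [Basis.coe_mk], LinearMap.smul_apply, smul_eq_mul,
      eq_comm] at h
  have hunit : ∀ y : E, ‖y‖ ≤ 1 → |e.coord j y| ≤ 1 := by
    intro y hy
    have h := hmax (Function.update e j y) fun i => by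
      rcases eq_or_ne i j with rfl | hij
      · simpa using hy
      · simpa [hij] using he i
    rw [hupdate, abs_mul] at h
    exact (mul_le_iff_le_one_right (abs_pos.mpr (b.isUnit_det e).ne_zero)).mp h
  calc |e.coord j x| = ‖x‖ * |e.coord j (normalize x)| := by
        conv_lhs => rw [← norm_smul_normalize x]
        rw [map_smul, smul_eq_mul, abs_mul, abs_norm]
    _ ≤ ‖x‖ * 1 := by gcongr; exact hunit _ (norm_normalize_le_one x)
    _ = ‖x‖ := mul_one _

theorem Module.Basis.exists_norm_le_one_forall_opNorm_le_sum_abs (b : Basis ι ℝ E) :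
    ∃ e : ι → E, (∀ j, ‖e j‖ ≤ 1) ∧ ∀ u : E →L[ℝ] ℝ, ‖u‖ ≤ ∑ j, |u (e j)| := by
  obtain ⟨e, he, hmax⟩ := b.exists_basis_norm_le_one_forall_abs_det_le
  exact ⟨e, he, e.opNorm_le_sum_abs_apply (b.abs_coord_le_norm_of_forall_abs_det_le e he hmax)⟩

end Auerbach

section FBL

variable {E : Type*} [NormedAddCommGroup E] [NormedSpace ℝ E] {κ : Type*} [Fintype κ]
  {γ : Type*} [DecidableEq γ]

def FBLAdmissible (x : κ → E →L[ℝ] ℝ) : Prop :=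
  ∀ v : E, ‖v‖ ≤ 1 → ∑ i, |x i v| ≤ 1

theorem ofReal_sum_abs_le_fblNormK {k : ℕ} (hk : Fintype.card κ = k)
    (f : (E →L[ℝ] ℝ) → ℝ) {x : κ → E →L[ℝ] ℝ} (hx : FBLAdmissible x) :
    ENNReal.ofReal (∑ i, |f (x i)|) ≤ fblNormK E k f := by
  subst hk
  let σ := Fintype.equivFin κ
  have hsum : ∀ g : (E →L[ℝ] ℝ) → ℝ, ∑ p, g (x (σ.symm p)) = ∑ i, g (x i) := fun g =>
    σ.symm.sum_comp fun i => g (x i)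
  exact le_iSup₂_of_le (x ∘ σ.symm) (fun v hv => (hsum fun y => |y v|).trans_le (hx v hv))
    (congrArg ENNReal.ofReal (hsum fun y => |f y|)).ge

theorem sum_norm_le_card_of_fblAdmissible {ι : Type*} [Fintype ι] {e : ι → E}
    (he₁ : ∀ j, ‖e j‖ ≤ 1) (he₂ : ∀ u : E →L[ℝ] ℝ, ‖u‖ ≤ ∑ j, |u (e j)|)
    {x : κ → E →L[ℝ] ℝ} (hx : FBLAdmissible x) : ∑ i, ‖x i‖ ≤ Fintype.card ι :=
  calc ∑ i, ‖x i‖ ≤ ∑ i, ∑ j, |x i (e j)| := Finset.sum_le_sum fun i _ => he₂ (x i)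
    _ = ∑ j, ∑ i, |x i (e j)| := Finset.sum_comm
    _ ≤ ∑ _j : ι, 1 := Finset.sum_le_sum fun j _ => hx (e j) (he₁ j)
    _ = Fintype.card ι := by simp

theorem exists_forall_norm_sub_le_and_le {F : Type*} [SeminormedAddCommGroup F] (ψ : κ → γ)
    (u : κ → F) (g : F → ℝ) {δ : ℝ} (hclose : ∀ i i', ψ i = ψ i' → ‖u i - u i'‖ ≤ δ) :
    ∃ r : γ → F, ∀ i, ‖r (ψ i) - u i‖ ≤ δ ∧ g (u i) ≤ g (r (ψ i)) := by
  have hrep : ∀ c, ∃ r : F, ∀ i, ψ i = c → ‖r - u i‖ ≤ δ ∧ g (u i) ≤ g r := by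
    intro c
    by_cases hc : (Finset.univ.filter (ψ · = c)).Nonempty
    · obtain ⟨i₀, hi₀, hmax⟩ := Finset.exists_max_image _ (fun i => g (u i)) hc
      exact ⟨u i₀, fun i hi => ⟨hclose _ _ ((Finset.mem_filter.mp hi₀).2.trans hi.symm),
        hmax i (by simp [hi])⟩⟩
    · exact ⟨0, fun i hi => absurd ⟨i, by simp [hi]⟩ hc⟩
  choose r hr using hrep
  exact ⟨r, fun i => hr _ i rfl⟩

variable [Fintype γ]

theorem sum_fiberwise_sum_mul (ψ : κ → γ) (w : κ → ℝ) (a : γ → ℝ) :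
    ∑ c, (∑ i with ψ i = c, w i) * a c = ∑ i, w i * a (ψ i) := by
  rw [← Finset.sum_fiberwise Finset.univ ψ (fun i => w i * a (ψ i))]
  refine Finset.sum_congr rfl fun c _ => ?_
  rw [Finset.sum_mul]
  exact Finset.sum_congr rfl fun i hi => by rw [(Finset.mem_filter.mp hi).2]

noncomputable def mergeFamily (x : κ → E →L[ℝ] ℝ) (ψ : κ → γ) (r : γ → E →L[ℝ] ℝ) :
    γ → E →L[ℝ] ℝ :=
  fun c => (2⁻¹ * ∑ i with ψ i = c, ‖x i‖) • r c

theorem fblAdmissible_mergeFamily {x : κ → E →L[ℝ] ℝ} (hx : FBLAdmissible x) (ψ : κ → γ)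
    {r : γ → E →L[ℝ] ℝ} {δ : ℝ} (hclose : ∀ i, ‖r (ψ i) - normalize (x i)‖ ≤ δ)
    (hδ : (∑ i, ‖x i‖) * δ ≤ 1) : FBLAdmissible (mergeFamily x ψ r) := by
  intro v hv
  have hr : ∀ i, ‖x i‖ * |r (ψ i) v| ≤ |x i v| + ‖x i‖ * δ := by
    intro i
    have h₁ : |r (ψ i) v - normalize (x i) v| ≤ δ :=
      (((r (ψ i) - normalize (x i)).le_opNorm v).trans
        (mul_le_of_le_one_right (norm_nonneg _) hv)).trans (hclose i)
    have h₂ : ‖x i‖ * |normalize (x i) v| = |x i v| := by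
      conv_rhs => rw [← norm_smul_normalize (x i)]
      rw [smul_apply, smul_eq_mul, abs_mul, abs_norm]
    nlinarith [abs_sub_abs_le_abs_sub (r (ψ i) v) (normalize (x i) v), norm_nonneg (x i)]
  calc ∑ c, |mergeFamily x ψ r c v|
      = 2⁻¹ * ∑ c, (∑ i with ψ i = c, ‖x i‖) * |r c v| := by
        rw [Finset.mul_sum]
        refine Finset.sum_congr rfl fun c _ => ?_
        rw [mergeFamily, smul_apply, smul_eq_mul, abs_mul, abs_of_nonneg (by positivity),
          mul_assoc]
    _ = 2⁻¹ * ∑ i, ‖x i‖ * |r (ψ i) v| := by rw [sum_fiberwise_sum_mul]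
    _ ≤ 2⁻¹ * (∑ i, |x i v| + (∑ i, ‖x i‖) * δ) := by
        rw [Finset.sum_mul, ← Finset.sum_add_distrib]
        gcongr with i
        exact hr i
    _ ≤ 1 := by linarith [hx v hv]

theorem sum_abs_le_two_mul_sum_abs_mergeFamily {f : (E →L[ℝ] ℝ) → ℝ}
    (hf : ∀ t : ℝ, 0 ≤ t → ∀ y : E →L[ℝ] ℝ, f (t • y) = t * f y) (x : κ → E →L[ℝ] ℝ)
    (ψ : κ → γ) {r : γ → E →L[ℝ] ℝ} (hmax : ∀ i, |f (normalize (x i))| ≤ |f (r (ψ i))|) :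
    ∑ i, |f (x i)| ≤ 2 * ∑ c, |f (mergeFamily x ψ r c)| := by
  have hfx : ∀ i, |f (x i)| = ‖x i‖ * |f (normalize (x i))| := fun i => by
    conv_lhs => rw [← norm_smul_normalize (x i)]
    rw [hf _ (norm_nonneg _), abs_mul, abs_norm]
  calc ∑ i, |f (x i)| = ∑ i, ‖x i‖ * |f (normalize (x i))| :=
        Finset.sum_congr rfl fun i _ => hfx i
    _ ≤ ∑ i, ‖x i‖ * |f (r (ψ i))| :=
        Finset.sum_le_sum fun i _ => mul_le_mul_of_nonneg_left (hmax i) (norm_nonneg _)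
    _ = ∑ c, (∑ i with ψ i = c, ‖x i‖) * |f (r c)| :=
        (sum_fiberwise_sum_mul ψ (fun i => ‖x i‖) fun c => |f (r c)|).symm
    _ = 2 * ∑ c, |f (mergeFamily x ψ r c)| := by
        rw [Finset.mul_sum]
        refine Finset.sum_congr rfl fun c _ => ?_
        have hw : 0 ≤ 2⁻¹ * ∑ i with ψ i = c, ‖x i‖ := by positivity
        rw [mergeFamily, hf _ hw, abs_mul, abs_of_nonneg hw]
        ring

end FBL

section Grid

variable {E : Type*} [NormedAddCommGroup E] [NormedSpace ℝ E] {ι : Type*} [Fintype ι]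

theorem floor_mul_natCast_mem_Icc {a : ℝ} (ha : |a| ≤ 1) (N : ℕ) :
    ⌊a * N⌋ ∈ Set.Icc (-(N : ℤ)) N := by
  obtain ⟨ha₁, ha₂⟩ := abs_le.mp ha
  constructor
  · rw [Int.le_floor]
    push_cast
    nlinarith [N.cast_nonneg (α := ℝ)]
  · rw [Int.floor_le_iff]
    push_cast
    nlinarith [N.cast_nonneg (α := ℝ)]

-- The clamping by `projIcc` is inactive for `‖u‖ ≤ 1`; it only makes the cell type finite.
noncomputable def gridCell (N : ℕ) (e : ι → E) (u : E →L[ℝ] ℝ) : ι → Set.Icc (-(N : ℤ)) N :=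
  fun j => Set.projIcc _ _ (by omega) ⌊u (e j) * N⌋

theorem norm_sub_le_of_gridCell_eq {N : ℕ} (hN : 0 < N) {e : ι → E} (he₁ : ∀ j, ‖e j‖ ≤ 1)
    (he₂ : ∀ u : E →L[ℝ] ℝ, ‖u‖ ≤ ∑ j, |u (e j)|) {u u' : E →L[ℝ] ℝ} (hu : ‖u‖ ≤ 1)
    (hu' : ‖u'‖ ≤ 1) (h : gridCell N e u = gridCell N e u') :
    ‖u - u'‖ ≤ Fintype.card ι / N := by
  have hmem : ∀ w : E →L[ℝ] ℝ, ‖w‖ ≤ 1 → ∀ j, ⌊w (e j) * N⌋ ∈ Set.Icc (-(N : ℤ)) N :=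
    fun w hw j => floor_mul_natCast_mem_Icc
      ((w.le_opNorm (e j)).trans (mul_le_one₀ hw (norm_nonneg _) (he₁ j))) N
  have hcoord : ∀ j, |(u - u') (e j)| ≤ 1 / N := by
    intro j
    have hj := congrArg Subtype.val (congrFun h j)
    simp only [gridCell, Set.projIcc_of_mem _ (hmem u hu j),
      Set.projIcc_of_mem _ (hmem u' hu' j)] at hj
    have hN' : (0 : ℝ) < N := by exact_mod_cast hN
    rw [le_div_iff₀ hN', sub_apply, ← abs_of_pos hN', ← abs_mul, sub_mul]
    exact (Int.abs_sub_lt_one_of_floor_eq_floor hj).le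
  calc ‖u - u'‖ ≤ ∑ j, |(u - u') (e j)| := he₂ _
    _ ≤ ∑ _j : ι, 1 / (N : ℝ) := Finset.sum_le_sum fun j _ => hcoord j
    _ = Fintype.card ι / N := by simp [div_eq_mul_inv]

variable [DecidableEq ι]

theorem card_gridCells (N : ℕ) :
    Fintype.card (ι → Set.Icc (-(N : ℤ)) N) = (2 * N + 1) ^ Fintype.card ι := by
  simp only [Fintype.card_fun, Fintype.card_Icc, Int.card_Icc]
  congr 1
  omega

end Grid

variable {E : Type*} [NormedAddCommGroup E] [NormedSpace ℝ E]

theorem ofReal_sum_abs_le_two_mul_fblNormK {f : (E →L[ℝ] ℝ) → ℝ}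
    (hf : ∀ t : ℝ, 0 ≤ t → ∀ y : E →L[ℝ] ℝ, f (t • y) = t * f y) {ι : Type*} [Fintype ι]
    [DecidableEq ι] {e : ι → E} (he₁ : ∀ j, ‖e j‖ ≤ 1) (he₂ : ∀ u : E →L[ℝ] ℝ, ‖u‖ ≤ ∑ j, |u (e j)|)
    {κ : Type*} [Fintype κ] {x : κ → E →L[ℝ] ℝ} (hx : FBLAdmissible x) :
    ENNReal.ofReal (∑ i, |f (x i)|) ≤
      ENNReal.ofReal 2 * fblNormK E ((2 * Fintype.card ι ^ 2 + 3) ^ Fintype.card ι) f := by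
  set n := Fintype.card ι
  set N := n ^ 2 + 1
  set ψ := fun i => gridCell N e (normalize (x i))
  obtain ⟨r, hr⟩ := exists_forall_norm_sub_le_and_le ψ (fun i => normalize (x i))
    (fun w => |f w|) fun i i' h => norm_sub_le_of_gridCell_eq (by positivity) he₁ he₂
      (norm_normalize_le_one _) (norm_normalize_le_one _) h
  have hδ : (∑ i, ‖x i‖) * (n / N) ≤ 1 := by
    have hN : (0 : ℝ) < N := by positivity
    calc (∑ i, ‖x i‖) * (n / N) ≤ n * (n / N) := by
          gcongr; exact sum_norm_le_card_of_fblAdmissible he₁ he₂ hx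
      _ ≤ 1 := by
          rw [← mul_div_assoc, div_le_one hN]
          push_cast [N]
          linarith
  have hcard : Fintype.card (ι → Set.Icc (-(N : ℤ)) N) = (2 * n ^ 2 + 3) ^ n := by
    rw [card_gridCells]
    ring
  calc ENNReal.ofReal (∑ i, |f (x i)|)
      ≤ ENNReal.ofReal (2 * ∑ c, |f (mergeFamily x ψ r c)|) :=
        ENNReal.ofReal_le_ofReal <|
          sum_abs_le_two_mul_sum_abs_mergeFamily hf x ψ fun i => (hr i).2
    _ = ENNReal.ofReal 2 * ENNReal.ofReal (∑ c, |f (mergeFamily x ψ r c)|) :=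
        ENNReal.ofReal_mul zero_le_two
    _ ≤ ENNReal.ofReal 2 * fblNormK E ((2 * n ^ 2 + 3) ^ n) f := by
        gcongr
        exact ofReal_sum_abs_le_fblNormK hcard f
          (fblAdmissible_mergeFamily hx ψ (fun i => (hr i).1) hδ)

/-- **Lemma.** There are a universal constant `C ≥ 1` and a function `κ : ℕ → ℕ` such that
for every finite-dimensional Banach space `E` of dimension `n` and every positively
homogeneous `f : E* → ℝ`, `‖f‖_{FBL[E]} ≤ C · ‖f‖_{FBL_{κ(n)}[E]}`. -/
theorem fblNorm_le_const_mul_fblNormK :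
    ∃ (C : ℝ) (κ : ℕ → ℕ), 1 ≤ C ∧
      ∀ (E : Type) [NormedAddCommGroup E] [NormedSpace ℝ E] [FiniteDimensional ℝ E],
        ∀ f : (E →L[ℝ] ℝ) → ℝ,
          (∀ t : ℝ, 0 ≤ t → ∀ y : E →L[ℝ] ℝ, f (t • y) = t * f y) →
          fblNorm E f ≤ ENNReal.ofReal C * fblNormK E (κ (Module.finrank ℝ E)) f := by
  refine ⟨2, fun n => (2 * n ^ 2 + 3) ^ n, one_le_two, fun E _ _ _ f hf => ?_⟩
  obtain ⟨e, he₁, he₂⟩ := (Module.finBasis ℝ E).exists_norm_le_one_forall_opNorm_le_sum_abs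
  refine iSup_le fun k => iSup₂_le fun x hx => ?_
  simpa only [Fintype.card_fin] using ofReal_sum_abs_le_two_mul_fblNormK hf he₁ he₂ hx
end

section
/- Let E be a finite-dimensional real Banach space, let k ∈ ℕ, let ε > 0, and let f : E* → ℝ be a nonnegative positively homogeneous function with ‖f‖_{FBL[E]} < ∞. Then there exists a continuous, nonnegative, positively homogeneous function g : E* → ℝ such that f ≤ g pointwise and ‖g‖_{FBL_k[E]} ≤ (1+ε)·‖f‖_{FBL_k[E]}. -/
/-!
Take `C = ‖f‖_{FBL[E]}` and replace `f` by its `C`-Lipschitz envelope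
`g x = sup_y (f y - C ‖x - y‖)`. Since `f ≤ C ‖·‖`, the envelope is finite, `C`-Lipschitz,
positively homogeneous and dominates `f`. For an admissible tuple `(x_i)` and near-optimal
`y_i`, the tuple `(y_i)` has weak `ℓ₁`-norm at most `1 + s` with `s = Σ ‖x_i - y_i‖`, so
`Σ g(x_i) ≈ Σ f(y_i) - C s ≤ (1 + s) ‖f‖_{FBL_k} - C s ≤ ‖f‖_{FBL_k}`.
-/

open scoped ENNReal

lemma sum_ciSup_le_of_forall_sum_le {ι κ : Type*} [Fintype ι] [Nonempty κ] {φ : ι → κ → ℝ}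
    {B : ℝ} (h : ∀ y : ι → κ, ∑ i, φ i (y i) ≤ B) :
    ∑ i, ⨆ j, φ i j ≤ B := by
  refine le_of_forall_pos_le_add fun η hη => ?_
  set δ : ℝ := η / (Fintype.card ι + 1)
  have hδ : 0 < δ := by positivity
  choose y hy using fun i => exists_lt_of_lt_ciSup (sub_lt_self (⨆ j, φ i j) hδ)
  have hcard : Fintype.card ι * δ ≤ η := by
    rw [mul_div_assoc', div_le_iff₀ (by positivity)]
    nlinarith
  calc ∑ i, ⨆ j, φ i j ≤ ∑ i, (φ i (y i) + δ) :=
        Finset.sum_le_sum fun i _ => by linarith [hy i]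
    _ = ∑ i, φ i (y i) + Fintype.card ι * δ := by simp [Finset.sum_add_distrib]
    _ ≤ B + η := add_le_add (h y) hcard

def IsPosHomogeneous {V : Type*} [SMul ℝ V] (f : V → ℝ) : Prop :=
  ∀ t : ℝ, 0 ≤ t → ∀ y, f (t • y) = t * f y

lemma IsPosHomogeneous.map_zero {V : Type*} [Zero V] [SMulWithZero ℝ V] {f : V → ℝ}
    (hf : IsPosHomogeneous f) : f 0 = 0 := by
  simpa using hf 0 le_rfl 0

section LipschitzEnvelope

variable {V : Type*} [SeminormedAddCommGroup V] {C : ℝ} {f : V → ℝ}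

/-- The least `C`-Lipschitz majorant of `f`, when `f` has one. -/
noncomputable def lipschitzEnvelope (C : ℝ) (f : V → ℝ) (x : V) : ℝ :=
  ⨆ y, f y - C * ‖x - y‖

lemma bddAbove_range_sub_mul_norm (hC : 0 ≤ C) (hf : ∀ y, f y ≤ C * ‖y‖) (x : V) :
    BddAbove (Set.range fun y => f y - C * ‖x - y‖) := by
  refine ⟨C * ‖x‖, ?_⟩
  rintro _ ⟨y, rfl⟩
  have : ‖y‖ ≤ ‖x‖ + ‖x - y‖ := by simpa using norm_sub_le x (x - y)
  nlinarith [hf y]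

lemma sub_le_lipschitzEnvelope (hC : 0 ≤ C) (hf : ∀ y, f y ≤ C * ‖y‖) (x y : V) :
    f y - C * ‖x - y‖ ≤ lipschitzEnvelope C f x :=
  le_ciSup (bddAbove_range_sub_mul_norm hC hf x) y

lemma le_lipschitzEnvelope (hC : 0 ≤ C) (hf : ∀ y, f y ≤ C * ‖y‖) (x : V) :
    f x ≤ lipschitzEnvelope C f x := by
  simpa using sub_le_lipschitzEnvelope hC hf x x

lemma lipschitzWith_lipschitzEnvelope (hC : 0 ≤ C) (hf : ∀ y, f y ≤ C * ‖y‖) :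
    LipschitzWith (Real.toNNReal C) (lipschitzEnvelope C f) := by
  refine LipschitzWith.of_le_add_mul' C fun x x' => ciSup_le fun y => ?_
  have := sub_le_lipschitzEnvelope hC hf x' y
  have : ‖x' - y‖ ≤ dist x x' + ‖x - y‖ := by
    simpa [dist_eq_norm, norm_sub_rev x x'] using norm_sub_le_norm_sub_add_norm_sub x' x y
  nlinarith

lemma isPosHomogeneous_lipschitzEnvelope [NormedSpace ℝ V] (hC : 0 ≤ C)
    (hf : ∀ y, f y ≤ C * ‖y‖) (hph : IsPosHomogeneous f) :
    IsPosHomogeneous (lipschitzEnvelope C f) := by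
  intro t ht x
  rcases ht.eq_or_lt with rfl | ht
  · rw [zero_smul, zero_mul]
    refine le_antisymm (ciSup_le fun y => ?_) ?_
    · simpa using hf y
    · simpa [hph.map_zero] using le_lipschitzEnvelope hC hf 0
  · have hsurj : Function.Surjective fun y : V => t • y := fun y =>
      ⟨t⁻¹ • y, smul_inv_smul₀ ht.ne' y⟩
    rw [lipschitzEnvelope, lipschitzEnvelope, ← hsurj.iSup_comp, Real.mul_iSup_of_nonneg ht.le]
    congr 1 with y
    rw [hph t ht.le, ← smul_sub, norm_smul, Real.norm_of_nonneg ht.le]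
    ring

end LipschitzEnvelope

section FBL

variable {E : Type*} [NormedAddCommGroup E] [NormedSpace ℝ E] {k : ℕ}

/-- The tuples admissible in `fblNormK` are those with `WeakL1NormLE x 1`. -/
def WeakL1NormLE (x : Fin k → E →L[ℝ] ℝ) (r : ℝ) : Prop :=
  ∀ v : E, ‖v‖ ≤ 1 → ∑ i, |x i v| ≤ r

lemma WeakL1NormLE.smul {x : Fin k → E →L[ℝ] ℝ} {r c : ℝ} (hx : WeakL1NormLE x r)
    (hc : 0 ≤ c) : WeakL1NormLE (c • x) (c * r) := fun v hv => by
  simpa [abs_mul, abs_of_nonneg hc, ← Finset.mul_sum] using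
    mul_le_mul_of_nonneg_left (hx v hv) hc

lemma WeakL1NormLE.add_sum_norm_sub {x : Fin k → E →L[ℝ] ℝ} {r : ℝ} (hx : WeakL1NormLE x r)
    (y : Fin k → E →L[ℝ] ℝ) : WeakL1NormLE y (r + ∑ i, ‖x i - y i‖) := fun v hv => by
  have hi : ∀ i, |y i v| ≤ |x i v| + ‖x i - y i‖ := fun i => by
    have := (x i - y i).le_of_opNorm_le_of_le le_rfl hv
    rw [mul_one, sub_apply, Real.norm_eq_abs] at this
    linarith [abs_sub_abs_le_abs_sub (y i v) (x i v), abs_sub_comm (y i v) (x i v)]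
  calc ∑ i, |y i v| ≤ ∑ i, (|x i v| + ‖x i - y i‖) := Finset.sum_le_sum fun i _ => hi i
    _ ≤ r + ∑ i, ‖x i - y i‖ := by rw [Finset.sum_add_distrib]; linarith [hx v hv]

lemma weakL1NormLE_single (u : E →L[ℝ] ℝ) : WeakL1NormLE ![u] ‖u‖ := fun v hv => by
  simpa using u.le_of_opNorm_le_of_le le_rfl hv

lemma fblNormK_le_fblNorm (k : ℕ) (f : (E →L[ℝ] ℝ) → ℝ) : fblNormK E k f ≤ fblNorm E f :=
  le_iSup (fun m => fblNormK E m f) k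

lemma sum_abs_le_mul_toReal_fblNormK {f : (E →L[ℝ] ℝ) → ℝ} (hph : IsPosHomogeneous f)
    (hk : fblNormK E k f ≠ ⊤) {x : Fin k → E →L[ℝ] ℝ} {r : ℝ} (hx : WeakL1NormLE x r)
    (hr : 0 < r) : ∑ i, |f (x i)| ≤ r * (fblNormK E k f).toReal := by
  have hadm : WeakL1NormLE (r⁻¹ • x) 1 := by simpa [hr.ne'] using hx.smul (inv_nonneg.2 hr.le)
  have hle : ENNReal.ofReal (∑ i, |f ((r⁻¹ • x) i)|) ≤ fblNormK E k f :=
    le_iSup₂_of_le (f := fun x (_ : WeakL1NormLE x 1) => ENNReal.ofReal (∑ i, |f (x i)|))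
      _ hadm le_rfl
  rw [← ENNReal.ofReal_toReal hk, ENNReal.ofReal_le_ofReal_iff ENNReal.toReal_nonneg] at hle
  simp only [Pi.smul_apply, hph _ (inv_nonneg.2 hr.le), abs_mul, abs_of_pos (inv_pos.2 hr),
    ← Finset.mul_sum] at hle
  rwa [inv_mul_le_iff₀ hr] at hle

lemma abs_le_toReal_fblNormK_one_mul_norm {f : (E →L[ℝ] ℝ) → ℝ} (hph : IsPosHomogeneous f)
    (h1 : fblNormK E 1 f ≠ ⊤) (y : E →L[ℝ] ℝ) : |f y| ≤ (fblNormK E 1 f).toReal * ‖y‖ := by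
  rcases (norm_nonneg y).eq_or_lt with hy | hy
  · rw [← hy, norm_eq_zero.1 hy.symm, hph.map_zero]
    simp
  · simpa [mul_comm] using sum_abs_le_mul_toReal_fblNormK hph h1 (weakL1NormLE_single y) hy

lemma fblNormK_lipschitzEnvelope_le {f : (E →L[ℝ] ℝ) → ℝ} {C : ℝ} (hnn : ∀ y, 0 ≤ f y)
    (hph : IsPosHomogeneous f) (hk : fblNormK E k f ≠ ⊤) (hCk : (fblNormK E k f).toReal ≤ C)
    (hf : ∀ y, f y ≤ C * ‖y‖) :
    fblNormK E k (lipschitzEnvelope C f) ≤ fblNormK E k f := by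
  have hC : 0 ≤ C := ENNReal.toReal_nonneg.trans hCk
  refine iSup₂_le fun x (hx : WeakL1NormLE x 1) => ?_
  rw [← ENNReal.ofReal_toReal hk]
  refine ENNReal.ofReal_le_ofReal ?_
  simp only [abs_of_nonneg ((hnn _).trans (le_lipschitzEnvelope hC hf _))]
  refine sum_ciSup_le_of_forall_sum_le fun y => ?_
  set s := ∑ i, ‖x i - y i‖
  have hs : 0 ≤ s := Finset.sum_nonneg fun i _ => norm_nonneg _
  have hfy : ∑ i, f (y i) ≤ (1 + s) * (fblNormK E k f).toReal :=
    (Finset.sum_le_sum fun i _ => le_abs_self _).trans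
      (sum_abs_le_mul_toReal_fblNormK hph hk (hx.add_sum_norm_sub y) (by positivity))
  rw [Finset.sum_sub_distrib, ← Finset.mul_sum]
  linarith [mul_le_mul_of_nonneg_left hCk hs]

end FBL

theorem exists_continuous_majorant_fblNormK_general
    (E : Type*) [NormedAddCommGroup E] [NormedSpace ℝ E]
    (k : ℕ) (ε : ℝ) (hε : 0 < ε)
    (f : (E →L[ℝ] ℝ) → ℝ)
    (hnn : ∀ y : E →L[ℝ] ℝ, 0 ≤ f y)
    (hph : ∀ t : ℝ, 0 ≤ t → ∀ y : E →L[ℝ] ℝ, f (t • y) = t * f y)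
    (hfin : fblNorm E f ≠ ⊤) :
    ∃ g : (E →L[ℝ] ℝ) → ℝ, Continuous g ∧ (∀ y, 0 ≤ g y) ∧
      (∀ t : ℝ, 0 ≤ t → ∀ y : E →L[ℝ] ℝ, g (t • y) = t * g y) ∧
      (∀ y, f y ≤ g y) ∧
      fblNormK E k g ≤ ENNReal.ofReal (1 + ε) * fblNormK E k f := by
  set C := (fblNorm E f).toReal
  have hC : 0 ≤ C := ENNReal.toReal_nonneg
  have hfinK : ∀ m, fblNormK E m f ≠ ⊤ := fun m => ne_top_of_le_ne_top hfin
    (fblNormK_le_fblNorm m f)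
  have hCK : ∀ m, (fblNormK E m f).toReal ≤ C := fun m =>
    ENNReal.toReal_mono hfin (fblNormK_le_fblNorm m f)
  have hfC : ∀ y, f y ≤ C * ‖y‖ := fun y =>
    (le_abs_self _).trans <| (abs_le_toReal_fblNormK_one_mul_norm hph (hfinK 1) y).trans <|
      mul_le_mul_of_nonneg_right (hCK 1) (norm_nonneg y)
  refine ⟨lipschitzEnvelope C f, (lipschitzWith_lipschitzEnvelope hC hfC).continuous,
    fun y => (hnn y).trans (le_lipschitzEnvelope hC hfC y),
    isPosHomogeneous_lipschitzEnvelope hC hfC hph, le_lipschitzEnvelope hC hfC, ?_⟩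
  calc fblNormK E k (lipschitzEnvelope C f) ≤ fblNormK E k f :=
        fblNormK_lipschitzEnvelope_le hnn hph (hfinK k) (hCK k) hfC
    _ ≤ ENNReal.ofReal (1 + ε) * fblNormK E k f :=
        le_mul_of_one_le_left' (ENNReal.one_le_ofReal.2 (by linarith))

/-- **Lemma.** Over a finite-dimensional Banach space `E`, every nonnegative positively
homogeneous `f : E* → ℝ` of finite FBL-norm admits, for each `k ∈ ℕ` and `ε > 0`, a
continuous nonnegative positively homogeneous majorant `g ≥ f` with
`‖g‖_{FBL_k[E]} ≤ (1+ε) ‖f‖_{FBL_k[E]}`. -/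
theorem exists_continuous_majorant_fblNormK
    (E : Type*) [NormedAddCommGroup E] [NormedSpace ℝ E] [FiniteDimensional ℝ E]
    (k : ℕ) (ε : ℝ) (hε : 0 < ε)
    (f : (E →L[ℝ] ℝ) → ℝ)
    (hnn : ∀ y : E →L[ℝ] ℝ, 0 ≤ f y)
    (hph : ∀ t : ℝ, 0 ≤ t → ∀ y : E →L[ℝ] ℝ, f (t • y) = t * f y)
    (hfin : fblNorm E f ≠ ⊤) :
    ∃ g : (E →L[ℝ] ℝ) → ℝ, Continuous g ∧ (∀ y, 0 ≤ g y) ∧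
      (∀ t : ℝ, 0 ≤ t → ∀ y : E →L[ℝ] ℝ, g (t • y) = t * g y) ∧
      (∀ y, f y ≤ g y) ∧
      fblNormK E k g ≤ ENNReal.ofReal (1 + ε) * fblNormK E k f :=
  exists_continuous_majorant_fblNormK_general E k ε hε f hnn hph hfin
end

section
/- Let E be a real Banach space, 1 ≤ p < ∞, and let f : E* → ℝ be a nonnegative positively homogeneous function with ‖f‖_{FBL^p[E]} < ∞. Then there exists a nonnegative positively homogeneous function f̃ : E* → ℝ such that f ≤ f̃ pointwise, ‖f̃‖_{FBL^p[E]} = ‖f‖_{FBL^p[E]}, and f̃ is maximal: every nonnegative positively homogeneous g : E* → ℝ with f̃ ≤ g pointwise and ‖g‖_{FBL^p[E]} = ‖f̃‖_{FBL^p[E]} equals f̃. -/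
open scoped ENNReal

/-- `‖f‖_{FBL^p[E]}`: the free `p`-convex Banach lattice norm of a positively homogeneous
function `f : E* → ℝ`, with values in `[0,∞]`. -/
noncomputable def fblNormP (E : Type*) [NormedAddCommGroup E] [NormedSpace ℝ E]
    (p : ℝ) (f : (E →L[ℝ] ℝ) → ℝ) : ℝ≥0∞ :=
  ⨆ (m : ℕ) (x : Fin m → (E →L[ℝ] ℝ)) (_ : ∀ v : E, ‖v‖ ≤ 1 → ∑ i, |x i v| ^ p ≤ 1),
    ENNReal.ofReal ((∑ i, |f (x i)| ^ p) ^ (1 / p))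

section Aux

variable {E : Type*} [NormedAddCommGroup E] [NormedSpace ℝ E]

/-- A single admissible family gives a lower bound for `fblNormP`. -/
lemma term_le_fblNormP (p : ℝ) (f : (E →L[ℝ] ℝ) → ℝ) {m : ℕ} {x : Fin m → (E →L[ℝ] ℝ)}
    (hx : ∀ v : E, ‖v‖ ≤ 1 → ∑ i, |x i v| ^ p ≤ 1) :
    ENNReal.ofReal ((∑ i, |f (x i)| ^ p) ^ (1 / p)) ≤ fblNormP E p f := by
  refine le_trans ?_ (le_iSup _ m)
  refine le_trans ?_ (le_iSup _ x)
  exact le_iSup (fun _ : (∀ v : E, ‖v‖ ≤ 1 → ∑ i, |x i v| ^ p ≤ 1) =>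
    ENNReal.ofReal ((∑ i, |f (x i)| ^ p) ^ (1 / p))) hx

/-- Monotonicity of `fblNormP` for nonnegative functions. -/
lemma fblNormP_mono (p : ℝ) (hp : 0 ≤ p) {f g : (E →L[ℝ] ℝ) → ℝ}
    (hf : ∀ y, 0 ≤ f y) (hfg : ∀ y, f y ≤ g y) :
    fblNormP E p f ≤ fblNormP E p g := by
  refine iSup_mono fun m => iSup_mono fun x => iSup_mono' fun hx => ⟨hx, ?_⟩
  refine ENNReal.ofReal_le_ofReal ?_
  refine Real.rpow_le_rpow (Finset.sum_nonneg fun i _ => Real.rpow_nonneg (abs_nonneg _) _)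
    (Finset.sum_le_sum fun i _ => ?_) (by positivity)
  refine Real.rpow_le_rpow (abs_nonneg _) ?_ hp
  rw [abs_of_nonneg (hf _), abs_of_nonneg ((hf _).trans (hfg _))]
  exact hfg _

/-- Pointwise bound from the norm: `g y ≤ ‖g‖ * ‖y‖`. -/
lemma le_toReal_mul_norm (p : ℝ) (hp : 1 ≤ p) (g : (E →L[ℝ] ℝ) → ℝ)
    (hnn : ∀ y, 0 ≤ g y) (hph : ∀ t : ℝ, 0 ≤ t → ∀ y : E →L[ℝ] ℝ, g (t • y) = t * g y)
    (hfin : fblNormP E p g ≠ ⊤) (y : E →L[ℝ] ℝ) :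
    g y ≤ (fblNormP E p g).toReal * ‖y‖ := by
  have hp0 : (0:ℝ) < p := lt_of_lt_of_le one_pos hp
  rcases eq_or_ne y 0 with rfl | hy
  · have h0 : g 0 = 0 := by
      have := hph 0 le_rfl 0
      simpa using this
    simp [h0]
  · set u : E →L[ℝ] ℝ := ‖y‖⁻¹ • y with hu
    have hyn : (0:ℝ) < ‖y‖ := norm_pos_iff.mpr hy
    have hadm : ∀ v : E, ‖v‖ ≤ 1 → ∑ i : Fin 1, |(fun _ : Fin 1 => u) i v| ^ p ≤ 1 := by
      intro v hv
      have h1 : |u v| ≤ 1 := by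
        have : ‖u‖ ≤ 1 := by
          have hns := norm_smul (‖y‖⁻¹) y
          rw [hu, hns, norm_inv, norm_norm]
          exact le_of_eq (inv_mul_cancel₀ hyn.ne')
        calc |u v| = ‖u v‖ := (Real.norm_eq_abs _).symm
          _ ≤ ‖u‖ * ‖v‖ := u.le_opNorm v
          _ ≤ 1 * 1 := mul_le_mul this hv (norm_nonneg _) zero_le_one
          _ = 1 := one_mul 1
      have := Real.rpow_le_one (abs_nonneg (u v)) h1 hp0.le
      simpa using this
    have hterm := term_le_fblNormP (E := E) p g hadm
    have hsum : (∑ i : Fin 1, |g ((fun _ : Fin 1 => u) i)| ^ p) ^ (1 / p) = g u := by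
      have : (∑ i : Fin 1, |g u| ^ p) = (g u) ^ p := by
        simp [abs_of_nonneg (hnn u)]
      rw [this, one_div, Real.rpow_rpow_inv (hnn u) hp0.ne']
    rw [hsum] at hterm
    have hgu : g u ≤ (fblNormP E p g).toReal :=
      (ENNReal.ofReal_le_iff_le_toReal hfin).mp hterm
    have hyu : y = ‖y‖ • u := by
      rw [hu, smul_smul, mul_inv_cancel₀ hyn.ne', one_smul]
    calc g y = g (‖y‖ • u) := by rw [← hyu]
      _ = ‖y‖ * g u := hph ‖y‖ (norm_nonneg y) u
      _ ≤ ‖y‖ * (fblNormP E p g).toReal := by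
          exact mul_le_mul_of_nonneg_left hgu (norm_nonneg y)
      _ = (fblNormP E p g).toReal * ‖y‖ := mul_comm _ _

/-- A finite family in a nonempty chain has an upper bound in the chain. -/
lemma chain_finite_ub {α : Type*} [Preorder α] {c : Set α} (hc : IsChain (· ≤ ·) c)
    (hne : c.Nonempty) : ∀ {m : ℕ} (g : Fin m → α), (∀ i, g i ∈ c) →
    ∃ G ∈ c, ∀ i, g i ≤ G := by
  intro m
  induction m with
  | zero => intro g _; exact ⟨hne.choose, hne.choose_spec, fun i => i.elim0⟩
  | succ n ih =>
    intro g hg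
    obtain ⟨G', hG'c, hG'⟩ := ih (fun i => g i.succ) (fun i => hg i.succ)
    rcases eq_or_ne (g 0) G' with h | h
    · exact ⟨G', hG'c, fun i => by
        rcases Fin.eq_zero_or_eq_succ i with rfl | ⟨j, rfl⟩
        · exact h.le
        · exact hG' j⟩
    · rcases hc (hg 0) hG'c h with h1 | h1
      · exact ⟨G', hG'c, fun i => by
          rcases Fin.eq_zero_or_eq_succ i with rfl | ⟨j, rfl⟩
          · exact h1
          · exact hG' j⟩
      · exact ⟨g 0, hg 0, fun i => by
          rcases Fin.eq_zero_or_eq_succ i with rfl | ⟨j, rfl⟩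
          · exact le_rfl
          · exact (hG' j).trans h1⟩

lemma real_le_of_forall_pos_le_add {a b : ℝ} (H : ∀ ε : ℝ, 0 < ε → a ≤ b + ε) : a ≤ b := by
  by_contra h
  push_neg at h
  have := H ((a - b) / 2) (by linarith)
  linarith

end Aux

/-- **Lemma (Zorn).** Every nonnegative positively homogeneous `f : E* → ℝ` of finite
`FBL^p`-norm is dominated by a *maximal* nonnegative positively homogeneous `f̃ ≥ f` with
the same `FBL^p`-norm; maximal means that any nonnegative positively homogeneous pointwise
majorant of `f̃` with the same `FBL^p`-norm equals `f̃`. -/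
theorem exists_maximal_majorant_fblNormP
    (E : Type*) [NormedAddCommGroup E] [NormedSpace ℝ E] [CompleteSpace E]
    (p : ℝ) (hp : 1 ≤ p)
    (f : (E →L[ℝ] ℝ) → ℝ)
    (hnn : ∀ y : E →L[ℝ] ℝ, 0 ≤ f y)
    (hph : ∀ t : ℝ, 0 ≤ t → ∀ y : E →L[ℝ] ℝ, f (t • y) = t * f y)
    (hfin : fblNormP E p f ≠ ⊤) :
    ∃ ft : (E →L[ℝ] ℝ) → ℝ,
      (∀ y, 0 ≤ ft y) ∧
      (∀ t : ℝ, 0 ≤ t → ∀ y : E →L[ℝ] ℝ, ft (t • y) = t * ft y) ∧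
      (∀ y, f y ≤ ft y) ∧
      fblNormP E p ft = fblNormP E p f ∧
      ∀ g : (E →L[ℝ] ℝ) → ℝ, (∀ y, 0 ≤ g y) →
        (∀ t : ℝ, 0 ≤ t → ∀ y : E →L[ℝ] ℝ, g (t • y) = t * g y) →
        (∀ y, ft y ≤ g y) → fblNormP E p g = fblNormP E p ft → g = ft := by
  have hp0 : (0:ℝ) < p := lt_of_lt_of_le one_pos hp
  set C : ℝ := (fblNormP E p f).toReal with hC
  -- the set on which we apply Zorn's lemma
  set S : Set ((E →L[ℝ] ℝ) → ℝ) :=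
    {g | (∀ y, 0 ≤ g y) ∧ (∀ t : ℝ, 0 ≤ t → ∀ y : E →L[ℝ] ℝ, g (t • y) = t * g y) ∧
      (∀ y, f y ≤ g y) ∧ fblNormP E p g = fblNormP E p f} with hS
  have hfS : f ∈ S := ⟨hnn, hph, fun y => le_rfl, rfl⟩
  -- every nonempty chain in S has an upper bound in S
  have hchain : ∀ c ⊆ S, IsChain (· ≤ ·) c → ∀ y0 ∈ c, ∃ ub ∈ S, ∀ z ∈ c, z ≤ ub := by
    intro c hcS hc g0 hg0
    have hcne : c.Nonempty := ⟨g0, hg0⟩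
    -- the pointwise sup
    set h : (E →L[ℝ] ℝ) → ℝ := fun y => sSup ((fun g => g y) '' c) with hh
    have hbdd : ∀ y : E →L[ℝ] ℝ, BddAbove ((fun g => g y) '' c) := by
      intro y
      refine ⟨C * ‖y‖, ?_⟩
      rintro _ ⟨g, hgc, rfl⟩
      obtain ⟨hg1, hg2, hg3, hg4⟩ := hcS hgc
      have := le_toReal_mul_norm (E := E) p hp g hg1 hg2 (hg4 ▸ hfin) y
      rwa [hg4] at this
    have hne : ∀ y : E →L[ℝ] ℝ, ((fun g => g y) '' c).Nonempty :=
      fun y => ⟨g0 y, ⟨g0, hg0, rfl⟩⟩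
    have hle_h : ∀ g ∈ c, ∀ y, g y ≤ h y :=
      fun g hgc y => le_csSup (hbdd y) ⟨g, hgc, rfl⟩
    have hh_le : ∀ y : E →L[ℝ] ℝ, ∀ b : ℝ, (∀ g ∈ c, g y ≤ b) → h y ≤ b := by
      intro y b hb
      refine csSup_le (hne y) ?_
      rintro _ ⟨g, hgc, rfl⟩
      exact hb g hgc
    have hnn_h : ∀ y, 0 ≤ h y := fun y => le_trans ((hcS hg0).1 y) (hle_h g0 hg0 y)
    have hf_le_h : ∀ y, f y ≤ h y := fun y => le_trans ((hcS hg0).2.2.1 y) (hle_h g0 hg0 y)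
    have hhom : ∀ t : ℝ, 0 ≤ t → ∀ y : E →L[ℝ] ℝ, h (t • y) = t * h y := by
      intro t ht y
      rcases eq_or_lt_of_le ht with rfl | ht
      · have hz : ∀ g ∈ c, g ((0:ℝ) • y) = 0 := by
          intro g hgc
          rw [(hcS hgc).2.1 0 le_rfl y, zero_mul]
        have : h ((0:ℝ) • y) = 0 := by
          refine le_antisymm (hh_le _ 0 fun g hgc => (hz g hgc).le) ?_
          have := hle_h g0 hg0 ((0:ℝ) • y)
          rw [hz g0 hg0] at this
          exact this
        rw [this, zero_mul]
      · refine le_antisymm ?_ ?_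
        · refine hh_le _ (t * h y) ?_
          intro g hgc
          rw [(hcS hgc).2.1 t ht.le y]
          exact mul_le_mul_of_nonneg_left (hle_h g hgc y) ht.le
        · rw [← le_div_iff₀' ht]
          refine hh_le y (h (t • y) / t) ?_
          intro g hgc
          rw [le_div_iff₀' ht, ← (hcS hgc).2.1 t ht.le y]
          exact hle_h g hgc (t • y)
    -- norm of h equals norm of f
    have hnorm_ge : fblNormP E p f ≤ fblNormP E p h := fblNormP_mono p hp0.le hnn hf_le_h
    have hnorm_le : fblNormP E p h ≤ fblNormP E p f := by
      refine iSup_le fun m => iSup_le fun x => iSup_le fun hx => ?_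
      rw [← ENNReal.ofReal_toReal hfin]
      refine ENNReal.ofReal_le_ofReal ?_
      refine real_le_of_forall_pos_le_add ?_
      intro ε hε
      rcases Nat.eq_zero_or_pos m with rfl | hm
      · have hs0 : (∑ i : Fin 0, |h (x i)| ^ p) = 0 := by simp
        rw [hs0, Real.zero_rpow (by positivity : (1:ℝ)/p ≠ 0)]
        have : (0:ℝ) ≤ C := ENNReal.toReal_nonneg
        linarith
      · have hmp : (0:ℝ) < (m : ℝ) ^ (1/p) :=
          Real.rpow_pos_of_pos (by exact_mod_cast hm) _
        set δ : ℝ := ε / (m : ℝ) ^ (1/p) with hδ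
        have hδ0 : 0 < δ := div_pos hε hmp
        -- choose g_i close to the sup at x i
        have hgi : ∀ i : Fin m, ∃ g ∈ c, h (x i) - δ < g (x i) := by
          intro i
          obtain ⟨_, ⟨g, hgc, rfl⟩, hlt⟩ :=
            exists_lt_of_lt_csSup (hne (x i)) (by linarith [hδ0] : h (x i) - δ < h (x i))
          exact ⟨g, hgc, hlt⟩
        choose gi hgi_mem hgi_lt using hgi
        obtain ⟨G, hGc, hGub⟩ := chain_finite_ub hc hcne gi hgi_mem
        obtain ⟨hG1, hG2, hG3, hG4⟩ := hcS hGc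
        have hhG : ∀ i : Fin m, h (x i) ≤ G (x i) + δ := by
          intro i
          have := (hgi_lt i).le.trans (hGub i (x i))
          linarith
        have step1 : (∑ i, |h (x i)| ^ p) ^ (1/p) ≤ (∑ i, |G (x i) + δ| ^ p) ^ (1/p) := by
          refine Real.rpow_le_rpow
            (Finset.sum_nonneg fun i _ => Real.rpow_nonneg (abs_nonneg _) _)
            (Finset.sum_le_sum fun i _ => ?_) (by positivity)
          refine Real.rpow_le_rpow (abs_nonneg _) ?_ hp0.le
          rw [abs_of_nonneg (hnn_h _), abs_of_nonneg (by linarith [hG1 (x i), hδ0.le] : 0 ≤ G (x i) + δ)]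
          exact hhG i
        have step2 : (∑ i, |G (x i) + δ| ^ p) ^ (1/p) ≤
            (∑ i, |G (x i)| ^ p) ^ (1/p) + (∑ i : Fin m, |δ| ^ p) ^ (1/p) :=
          Real.Lp_add_le Finset.univ (fun i => G (x i)) (fun _ => δ) hp
        have step3 : (∑ i : Fin m, |δ| ^ p) ^ (1/p) = ε := by
          rw [Finset.sum_const, Finset.card_univ, Fintype.card_fin, nsmul_eq_mul,
            Real.mul_rpow (by positivity) (Real.rpow_nonneg (abs_nonneg _) _)]
          rw [abs_of_nonneg hδ0.le, ← Real.rpow_mul hδ0.le,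
            mul_one_div_cancel hp0.ne', Real.rpow_one, hδ, mul_comm,
            div_mul_cancel₀ _ hmp.ne']
        have step4 : (∑ i, |G (x i)| ^ p) ^ (1/p) ≤ C := by
          have hterm := term_le_fblNormP (E := E) p G hx
          rw [hG4] at hterm
          exact (ENNReal.ofReal_le_iff_le_toReal hfin).mp hterm
        calc (∑ i, |h (x i)| ^ p) ^ (1/p)
            ≤ (∑ i, |G (x i) + δ| ^ p) ^ (1/p) := step1
          _ ≤ (∑ i, |G (x i)| ^ p) ^ (1/p) + (∑ i : Fin m, |δ| ^ p) ^ (1/p) := step2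
          _ = (∑ i, |G (x i)| ^ p) ^ (1/p) + ε := by rw [step3]
          _ ≤ C + ε := by linarith [step4]
    exact ⟨h, ⟨hnn_h, hhom, hf_le_h, le_antisymm hnorm_le hnorm_ge⟩,
      fun z hzc => hle_h z hzc⟩
  obtain ⟨ft, hfft, hftS, hmax⟩ := zorn_le_nonempty₀ S hchain f hfS
  obtain ⟨h1, h2, h3, h4⟩ := hftS
  refine ⟨ft, h1, h2, h3, h4, ?_⟩
  intro g hg1 hg2 hg3 hg4
  have hgS : g ∈ S := ⟨hg1, hg2, fun y => (h3 y).trans (hg3 y), by rw [hg4, h4]⟩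
  exact le_antisymm (hmax hgS hg3) hg3
end

section
/- Let A be a nonempty set, 1 ≤ p < ∞, and let φ : ℓ∞(A) → ℝ be a bounded linear functional. Let h : A → ℝ be given by h(a) := φ(e_a), where e_a ∈ ℓ∞(A) is the indicator function of {a}, and assume h is absolutely summable. Let B denote the closed unit ball of ℓ∞(A) and let ξ : B → ℝ be continuous with respect to the topology of pointwise convergence on B. If ξ(x) ≤ |φ(|x|^p)|^{1/p} for every x ∈ B (where |x|^p ∈ ℓ∞(A) is the function a ↦ |x(a)|^p), then ξ(x) ≤ |Σ_{a∈A} h(a)·|x(a)|^p|^{1/p} for every x ∈ B. -/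
open scoped ENNReal Topology
open Filter

/-- The pointwise `p`-th power of the absolute value, `|x|^p`, as an element of `ℓ∞(A)`. -/
noncomputable def absRpow {A : Type*} (p : ℝ) (hp : 0 ≤ p)
    (x : lp (fun _ : A => ℝ) ∞) : lp (fun _ : A => ℝ) ∞ :=
  ⟨fun a => |x a| ^ p, by
    apply memℓp_infty
    refine ⟨‖x‖ ^ p, ?_⟩
    rintro r ⟨a, rfl⟩
    have h1 : |x a| ≤ ‖x‖ := by
      have := lp.norm_apply_le_norm (p := ∞) (by norm_num) x a
      rwa [Real.norm_eq_abs] at this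
    have h2 := Real.rpow_le_rpow (abs_nonneg (x a)) h1 hp
    calc ‖|x a| ^ p‖ = |x a| ^ p := by
            rw [Real.norm_eq_abs, abs_of_nonneg (Real.rpow_nonneg (abs_nonneg (x a)) p)]
      _ ≤ ‖x‖ ^ p := h2⟩

/-- The indicator function `e_a` of the singleton `{a}`, as an element of `ℓ∞(A)`. -/
noncomputable def eSingle (A : Type*) (a : A) : lp (fun _ : A => ℝ) ∞ :=
  haveI := Classical.decEq A
  lp.single ∞ a (1 : ℝ)

/-- The closed unit ball of `ℓ∞(A)`, equipped with the topology of pointwise convergence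
(equivalently, the weak* topology from the identification `ℓ∞(A) = ℓ₁(A)*`). -/
def ballPtwise (A : Type*) : Type _ := {x : lp (fun _ : A => ℝ) ∞ // ‖x‖ ≤ 1}

instance (A : Type*) : TopologicalSpace (ballPtwise A) :=
  TopologicalSpace.induced (fun x : ballPtwise A => (x.1 : ∀ _ : A, ℝ)) Pi.topologicalSpace

/-! The truncations `x · 1_F` to finite sets `F ⊆ A` stay in the unit ball and converge to `x`
pointwise, and on them `φ(|x · 1_F|^p) = Σ_{a ∈ F} h(a) |x(a)|^p` by linearity alone. So the
hypothesis bounds `ξ` along this net, and continuity of `ξ` for the pointwise topology, together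
with summability of `h(a) |x(a)|^p`, carries the bound to the limit `x`. -/

section Truncation

variable {A : Type*}

theorem absRpow_apply {p : ℝ} (hp : 0 ≤ p) (x : lp (fun _ : A => ℝ) ∞) (a : A) :
    absRpow p hp x a = |x a| ^ p :=
  rfl

theorem eSingle_eq_single [DecidableEq A] (a : A) : eSingle A a = lp.single ∞ a 1 := by
  unfold eSingle
  congr
  exact Subsingleton.elim _ _

noncomputable def truncate (F : Finset A) (x : lp (fun _ : A => ℝ) ∞) : lp (fun _ : A => ℝ) ∞ :=
  ∑ a ∈ F, x a • eSingle A a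

theorem truncate_apply (F : Finset A) (x : lp (fun _ : A => ℝ) ∞) (b : A) :
    truncate F x b = (F : Set A).indicator x b := by
  classical
  simp only [truncate, lp.coeFn_sum, Finset.sum_apply, lp.coeFn_smul, Pi.smul_apply,
    eSingle_eq_single, lp.single_apply, Pi.single_apply, smul_eq_mul, mul_ite, mul_one, mul_zero,
    Finset.sum_ite_eq, Set.indicator_apply, Finset.mem_coe]

theorem norm_truncate_le (F : Finset A) (x : lp (fun _ : A => ℝ) ∞) :
    ‖truncate F x‖ ≤ ‖x‖ := by
  refine lp.norm_le_of_forall_le (norm_nonneg x) fun b => ?_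
  rw [truncate_apply]
  exact (norm_indicator_le_norm_self _ b).trans (lp.norm_apply_le_norm ENNReal.top_ne_zero x b)

theorem map_truncate (φ : lp (fun _ : A => ℝ) ∞ →L[ℝ] ℝ) (F : Finset A)
    (x : lp (fun _ : A => ℝ) ∞) : φ (truncate F x) = ∑ a ∈ F, φ (eSingle A a) * x a := by
  simp [truncate, map_sum, map_smul, mul_comm]

theorem absRpow_truncate {p : ℝ} (hp : 0 ≤ p) (hp0 : p ≠ 0) (F : Finset A)
    (x : lp (fun _ : A => ℝ) ∞) : absRpow p hp (truncate F x) = truncate F (absRpow p hp x) := by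
  ext b
  by_cases hb : b ∈ (F : Set A)
  · simp only [absRpow_apply, truncate_apply, Set.indicator_of_mem hb]
  · simp [absRpow_apply, truncate_apply, Set.indicator_of_notMem hb, Real.zero_rpow hp0]

theorem tendsto_truncate_ballPtwise {x : lp (fun _ : A => ℝ) ∞} (hx : ‖x‖ ≤ 1) :
    Tendsto
      (fun F : Finset A =>
        (show ballPtwise A from ⟨truncate F x, (norm_truncate_le F x).trans hx⟩))
      atTop (𝓝 (show ballPtwise A from ⟨x, hx⟩)) := by
  rw [(Topology.IsInducing.mk rfl : Topology.IsInducing fun y : ballPtwise A => (y.1 : A → ℝ))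
    |>.tendsto_nhds_iff, tendsto_pi_nhds]
  intro a
  refine tendsto_const_nhds.congr' ?_
  filter_upwards [eventually_ge_atTop {a}] with F hF
  change x a = truncate F x a
  rw [truncate_apply, Set.indicator_of_mem (Finset.singleton_subset_iff.mp hF)]

end Truncation

theorem summable_mul_of_summable_abs {A : Type*} {h : A → ℝ} (hsum : Summable fun a => |h a|)
    (y : lp (fun _ : A => ℝ) ∞) : Summable fun a => h a * y a :=
  (hsum.mul_right ‖y‖).of_norm_bounded fun a => by
    rw [norm_mul, Real.norm_eq_abs]
    exact mul_le_mul_of_nonneg_left (lp.norm_apply_le_norm ENNReal.top_ne_zero y a) (abs_nonneg _)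

theorem continuity_reduces_to_atomic_part_general
    (A : Type*) (p : ℝ) (hp : 1 ≤ p)
    (φ : lp (fun _ : A => ℝ) ∞ →L[ℝ] ℝ)
    (h : A → ℝ) (hdef : ∀ a : A, h a = φ (eSingle A a))
    (hsum : Summable fun a => |h a|)
    (ξ : lp (fun _ : A => ℝ) ∞ → ℝ)
    (hcont : Continuous fun x : ballPtwise A => ξ x.1)
    (hle : ∀ x : lp (fun _ : A => ℝ) ∞, ‖x‖ ≤ 1 →
      ξ x ≤ |φ (absRpow p (zero_le_one.trans hp) x)| ^ (1 / p)) :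
    ∀ x : lp (fun _ : A => ℝ) ∞, ‖x‖ ≤ 1 →
      ξ x ≤ |∑' a : A, h a * |x a| ^ p| ^ (1 / p) := by
  intro x hx
  have h_trunc : ∀ F : Finset A, ξ (truncate F x) ≤ |∑ a ∈ F, h a * |x a| ^ p| ^ (1 / p) := by
    intro F
    simpa only [absRpow_truncate _ (zero_lt_one.trans_le hp).ne', map_truncate, ← hdef,
      absRpow_apply] using hle _ ((norm_truncate_le F x).trans hx)
  have h_lhs : Tendsto (fun F : Finset A => ξ (truncate F x)) atTop (𝓝 (ξ x)) :=
    (hcont.tendsto _).comp (tendsto_truncate_ballPtwise hx)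
  have h_rhs : Tendsto (fun F : Finset A => |∑ a ∈ F, h a * |x a| ^ p| ^ (1 / p)) atTop
      (𝓝 (|∑' a : A, h a * |x a| ^ p| ^ (1 / p))) :=
    (continuous_abs.rpow_const fun _ => Or.inr (by positivity)).continuousAt.tendsto.comp
      (summable_mul_of_summable_abs hsum (absRpow p (zero_le_one.trans hp) x)).hasSum
  exact le_of_tendsto_of_tendsto' h_lhs h_rhs h_trunc

/-- **Lemma.** Let `φ` be a bounded linear functional on `ℓ∞(A)` whose "atomic part"
`h(a) = φ(e_a)` is absolutely summable, and let `ξ` be a function on the closed unit ball of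
`ℓ∞(A)` which is continuous for the topology of pointwise convergence. If
`ξ(x) ≤ |φ(|x|^p)|^{1/p}` on the ball, then also `ξ(x) ≤ |Σ_{a∈A} h(a)|x(a)|^p|^{1/p}`
on the ball. -/
theorem continuity_reduces_to_atomic_part
    (A : Type*) [Nonempty A] (p : ℝ) (hp : 1 ≤ p)
    (φ : lp (fun _ : A => ℝ) ∞ →L[ℝ] ℝ)
    (h : A → ℝ) (hdef : ∀ a : A, h a = φ (eSingle A a))
    (hsum : Summable fun a => |h a|)
    (ξ : lp (fun _ : A => ℝ) ∞ → ℝ)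
    (hcont : Continuous fun x : ballPtwise A => ξ x.1)
    (hle : ∀ x : lp (fun _ : A => ℝ) ∞, ‖x‖ ≤ 1 →
      ξ x ≤ |φ (absRpow p (zero_le_one.trans hp) x)| ^ (1 / p)) :
    ∀ x : lp (fun _ : A => ℝ) ∞, ‖x‖ ≤ 1 →
      ξ x ≤ |∑' a : A, h a * |x a| ^ p| ^ (1 / p) :=
  continuity_reduces_to_atomic_part_general A p hp φ h hdef hsum ξ hcont hle
end
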